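/- arXiv:0911.4730 — 6 statements merged into one kernel-verified Lean document; each statement's English description precedes it below -/
import Mathlib

section
/- Let a, b ∈ ℝ be such that the indicial polynomial x(x−1) + a·x + b has two distinct real roots γ₁ < γ₂. Let 0 ≤ B₁ < B₂ ≤ ∞ and let f : (B₁, B₂) → ℝ be twice differentiable and satisfy the Euler-type ODE r²·f''(r) + a·r·f'(r) + b·f(r) = φ(r) for all r ∈ (B₁, B₂), where the inhomogeneity satisfies |φ(r)| ≤ Σ_{k=1}^p c_k · r^{δ_k} for real exponents δ₁, …, δ_p with δ_k ∉ {γ₁, γ₂} for each k, and constants c_k ≥ 0. Then there exist real numbers A₁, A₂ and constants C₁, …, C_p, where each C_k depends only on a, b, δ_k and c_k (and not on B₁, B₂ or f), such that |f(r) − A₁·r^{γ₁} − A₂·r^{γ₂}| ≤ Σ_{k=1}^p C_k · r^{δ_k} for all r ∈ (B₁, B₂). -/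
/-!
The Euler operator factors as `(r d/dr - γ₁) (r d/dr - γ₂)`, so it suffices to solve the
first-order problem `r g' - γ g = ψ` twice. There `h = r ^ (-γ) * g` satisfies
`|h'| ≤ D'` for `D = ∑ c_k / (δ_k - γ) * r ^ (δ_k - γ)`, and comparing `h` with `D` gives
`|h y - h x| ≤ Q x + Q y` for `Q = ∑ c_k / |δ_k - γ| * r ^ (δ_k - γ)`. Hence the intervals
`[h - Q, h + Q]` meet pairwise and so share a point `A`, which is the constant of the
homogeneous solution. The two steps produce the constant `c_k / |(δ_k - γ₁) (δ_k - γ₂)|`,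
i.e. `c_k` divided by the indicial polynomial at `δ_k`.
-/

open Set

theorem exists_forall_abs_sub_le {S : Set ℝ} {h Q : ℝ → ℝ}
    (hpair : ∀ x ∈ S, ∀ y ∈ S, h x - Q x ≤ h y + Q y) :
    ∃ A, ∀ r ∈ S, |h r - A| ≤ Q r := by
  refine ⟨sSup ((fun x => h x - Q x) '' S), fun r hr => abs_sub_le_iff.mpr ⟨?_, ?_⟩⟩
  · have hbdd : BddAbove ((fun x => h x - Q x) '' S) :=
      ⟨h r + Q r, forall_mem_image.mpr fun x hx => hpair x hx r hr⟩
    linarith [le_csSup hbdd (mem_image_of_mem _ hr)]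
  · have hle := csSup_le (nonempty_of_mem (mem_image_of_mem (fun x => h x - Q x) hr))
      (forall_mem_image.mpr fun x hx => hpair x hx r hr)
    linarith

theorem abs_sub_le_sub_of_abs_deriv_le {S : Set ℝ} (hS : S.OrdConnected) {h h' D D' : ℝ → ℝ}
    (hh : ∀ r ∈ S, HasDerivAt h (h' r) r) (hD : ∀ r ∈ S, HasDerivAt D (D' r) r)
    (hle : ∀ r ∈ S, |h' r| ≤ D' r) {x y : ℝ} (hx : x ∈ S) (hy : y ∈ S) (hxy : x ≤ y) :
    |h y - h x| ≤ D y - D x := by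
  have hIcc : Icc x y ⊆ S := hS.out hx hy
  have hIco : Ico x y ⊆ S := Ico_subset_Icc_self.trans hIcc
  have hcont : ∀ {u u' : ℝ → ℝ}, (∀ r ∈ S, HasDerivAt u (u' r) r) →
      ContinuousOn (fun t => u t - u x) (Icc x y) := fun hu t ht =>
    ((hu t (hIcc ht)).continuousAt.sub continuousAt_const).continuousWithinAt
  have hderiv : ∀ {u u' : ℝ → ℝ}, (∀ r ∈ S, HasDerivAt u (u' r) r) →
      ∀ t ∈ Ico x y, HasDerivWithinAt (fun t => u t - u x) (u' t) (Ici t) t := fun hu t ht =>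
    ((hu t (hIco ht)).sub_const _).hasDerivWithinAt
  exact image_norm_le_of_norm_deriv_right_le_deriv_boundary' (hcont hh) (hderiv hh)
    (by simp) (hcont hD) (hderiv hD) (fun t ht => hle t (hIco ht)) ⟨hxy, le_rfl⟩

theorem abs_rpow_sub_rpow_le {x y : ℝ} (hx : 0 ≤ x) (hy : 0 ≤ y) (e : ℝ) :
    |y ^ e - x ^ e| ≤ x ^ e + y ^ e :=
  abs_sub_le_iff.mpr ⟨by linarith [Real.rpow_nonneg hx e], by linarith [Real.rpow_nonneg hy e]⟩

section PowerSums

variable {ι : Type*} [Fintype ι] (c e : ι → ℝ)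

theorem hasDerivAt_sum_div_mul_rpow {r : ℝ} (hr : r ≠ 0) (he : ∀ k, e k ≠ 0) :
    HasDerivAt (fun t => ∑ k, c k / e k * t ^ e k) (∑ k, c k * r ^ (e k - 1)) r := by
  refine HasDerivAt.fun_sum fun k _ => ?_
  refine ((Real.hasDerivAt_rpow_const (p := e k) (Or.inl hr)).const_mul (c k / e k)).congr_deriv ?_
  rw [← mul_assoc, div_mul_cancel₀ _ (he k)]

theorem abs_sum_div_mul_rpow_sub_le (hc : ∀ k, 0 ≤ c k) {x y : ℝ} (hx : 0 ≤ x) (hy : 0 ≤ y) :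
    |∑ k, c k / e k * y ^ e k - ∑ k, c k / e k * x ^ e k|
      ≤ ∑ k, c k / |e k| * x ^ e k + ∑ k, c k / |e k| * y ^ e k := by
  rw [← Finset.sum_sub_distrib, ← Finset.sum_add_distrib]
  refine (Finset.abs_sum_le_sum_abs _ _).trans (Finset.sum_le_sum fun k _ => ?_)
  calc |c k / e k * y ^ e k - c k / e k * x ^ e k|
      = c k / |e k| * |y ^ e k - x ^ e k| := by
        rw [← mul_sub, abs_mul, abs_div, abs_of_nonneg (hc k)]
    _ ≤ c k / |e k| * (x ^ e k + y ^ e k) :=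
        mul_le_mul_of_nonneg_left (abs_rpow_sub_rpow_le hx hy _) (div_nonneg (hc k) (abs_nonneg _))
    _ = _ := mul_add _ _ _

end PowerSums

theorem exists_abs_sub_le_of_abs_deriv_le_sum_rpow {ι : Type*} [Fintype ι] {c e : ι → ℝ}
    (hc : ∀ k, 0 ≤ c k) (he : ∀ k, e k ≠ 0) {S : Set ℝ} (hS : S.OrdConnected)
    (hSpos : S ⊆ Ioi 0) {h h' : ℝ → ℝ} (hh : ∀ r ∈ S, HasDerivAt h (h' r) r)
    (hbound : ∀ r ∈ S, |h' r| ≤ ∑ k, c k * r ^ (e k - 1)) :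
    ∃ A, ∀ r ∈ S, |h r - A| ≤ ∑ k, c k / |e k| * r ^ e k := by
  set D := fun t => ∑ k, c k / e k * t ^ e k
  set Q := fun t => ∑ k, c k / |e k| * t ^ e k
  have hD : ∀ r ∈ S, HasDerivAt D (∑ k, c k * r ^ (e k - 1)) r :=
    fun r hr => hasDerivAt_sum_div_mul_rpow c e (hSpos hr).ne' he
  have hclose : ∀ x ∈ S, ∀ y ∈ S, x ≤ y → |h y - h x| ≤ Q x + Q y := fun x hx y hy hxy =>
    calc |h y - h x| ≤ D y - D x := abs_sub_le_sub_of_abs_deriv_le hS hh hD hbound hx hy hxy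
      _ ≤ |D y - D x| := le_abs_self _
      _ ≤ Q x + Q y := abs_sum_div_mul_rpow_sub_le c e hc (hSpos hx).le (hSpos hy).le
  refine exists_forall_abs_sub_le fun x hx y hy => ?_
  have : |h y - h x| ≤ Q x + Q y := by
    rcases le_total x y with hxy | hyx
    · exact hclose x hx y hy hxy
    · rw [abs_sub_comm, add_comm]; exact hclose y hy x hx hyx
  linarith [neg_abs_le (h y - h x)]

theorem exists_abs_sub_mul_rpow_le_of_euler_first_order {ι : Type*} [Fintype ι] {c δ : ι → ℝ}
    (hc : ∀ k, 0 ≤ c k) {γ : ℝ} (hδ : ∀ k, δ k ≠ γ) {S : Set ℝ} (hS : S.OrdConnected)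
    (hSpos : S ⊆ Ioi 0) {g g' : ℝ → ℝ} (hg : ∀ r ∈ S, HasDerivAt g (g' r) r)
    (hbound : ∀ r ∈ S, |r * g' r - γ * g r| ≤ ∑ k, c k * r ^ δ k) :
    ∃ A, ∀ r ∈ S, |g r - A * r ^ γ| ≤ ∑ k, c k / |δ k - γ| * r ^ δ k := by
  have hderiv : ∀ r ∈ S, HasDerivAt (fun t => t ^ (-γ) * g t)
      (r ^ (-γ - 1) * (r * g' r - γ * g r)) r := fun r hr => by
    have hr0 : r ≠ 0 := (hSpos hr).ne'
    refine ((Real.hasDerivAt_rpow_const (p := -γ) (Or.inl hr0)).mul (hg r hr)).congr_deriv ?_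
    rw [show -γ = -γ - 1 + 1 by ring, Real.rpow_add_one hr0, show -γ - 1 + 1 - 1 = -γ - 1 by ring]
    ring
  have hdbound : ∀ r ∈ S, |r ^ (-γ - 1) * (r * g' r - γ * g r)|
      ≤ ∑ k, c k * r ^ (δ k - γ - 1) := fun r hr => by
    have hr0 : 0 < r := hSpos hr
    rw [abs_mul, abs_of_pos (Real.rpow_pos_of_pos hr0 _)]
    refine (mul_le_mul_of_nonneg_left (hbound r hr) (Real.rpow_nonneg hr0.le _)).trans_eq ?_
    rw [Finset.mul_sum]
    refine Finset.sum_congr rfl fun k _ => ?_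
    rw [show δ k - γ - 1 = -γ - 1 + δ k by ring, Real.rpow_add hr0]
    ring
  obtain ⟨A, hA⟩ := exists_abs_sub_le_of_abs_deriv_le_sum_rpow hc (fun k => sub_ne_zero.mpr (hδ k))
    hS hSpos hderiv hdbound
  refine ⟨A, fun r hr => ?_⟩
  have hr0 : 0 < r := hSpos hr
  have hpos : 0 < r ^ γ := Real.rpow_pos_of_pos hr0 γ
  calc |g r - A * r ^ γ| = r ^ γ * |r ^ (-γ) * g r - A| := by
        rw [Real.rpow_neg hr0.le, ← abs_of_pos hpos, ← abs_mul, abs_of_pos hpos]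
        congr 1
        field_simp
    _ ≤ r ^ γ * ∑ k, c k / |δ k - γ| * r ^ (δ k - γ) :=
        mul_le_mul_of_nonneg_left (hA r hr) hpos.le
    _ = ∑ k, c k / |δ k - γ| * r ^ δ k := by
        rw [Finset.mul_sum]
        refine Finset.sum_congr rfl fun k _ => ?_
        rw [Real.rpow_sub hr0]
        field_simp

theorem exists_abs_sub_le_of_euler_second_order {ι : Type*} [Fintype ι] {c δ : ι → ℝ}
    (hc : ∀ k, 0 ≤ c k) {γ₁ γ₂ : ℝ} (hγ : γ₁ ≠ γ₂) (hδ : ∀ k, δ k ≠ γ₁ ∧ δ k ≠ γ₂)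
    {S : Set ℝ} (hS : S.OrdConnected) (hSpos : S ⊆ Ioi 0) {f f' f'' : ℝ → ℝ}
    (hf : ∀ r ∈ S, HasDerivAt f (f' r) r) (hf' : ∀ r ∈ S, HasDerivAt f' (f'' r) r)
    (hbound : ∀ r ∈ S,
      |r ^ 2 * f'' r + (1 - γ₁ - γ₂) * r * f' r + γ₁ * γ₂ * f r| ≤ ∑ k, c k * r ^ δ k) :
    ∃ A₁ A₂ : ℝ, ∀ r ∈ S, |f r - A₁ * r ^ γ₁ - A₂ * r ^ γ₂|
      ≤ ∑ k, c k / |(δ k - γ₁) * (δ k - γ₂)| * r ^ δ k := by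
  obtain ⟨A, hA⟩ := exists_abs_sub_mul_rpow_le_of_euler_first_order hc (fun k => (hδ k).1) hS hSpos
    (g := fun r => r * f' r - γ₂ * f r) (g' := fun r => f' r + r * f'' r - γ₂ * f' r)
    (fun r hr => (((hasDerivAt_id r).mul (hf' r hr)).sub ((hf r hr).const_mul γ₂)).congr_deriv
      (by simp))
    (fun r hr => (hbound r hr).trans_eq' (by ring_nf))
  have hγ' : γ₁ - γ₂ ≠ 0 := sub_ne_zero.mpr hγ
  set A₁ := A / (γ₁ - γ₂)
  obtain ⟨A₂, hA₂⟩ := exists_abs_sub_mul_rpow_le_of_euler_first_order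
    (c := fun k => c k / |δ k - γ₁|) (fun k => div_nonneg (hc k) (abs_nonneg _))
    (fun k => (hδ k).2) hS hSpos (g := fun r => f r - A₁ * r ^ γ₁)
    (g' := fun r => f' r - A₁ * (γ₁ * r ^ (γ₁ - 1)))
    (fun r hr => (hf r hr).sub ((Real.hasDerivAt_rpow_const (Or.inl (hSpos hr).ne')).const_mul _))
    (fun r hr => by
      refine (hA r hr).trans_eq' (congrArg _ ?_)
      have hr0 : r ≠ 0 := (hSpos hr).ne'
      rw [Real.rpow_sub_one hr0]
      simp only [A₁]
      field_simp
      ring)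
  refine ⟨A₁, A₂, fun r hr => (hA₂ r hr).trans_eq (Finset.sum_congr rfl fun k _ => ?_)⟩
  rw [abs_mul, div_div]

theorem vieta_of_ne_roots {a b γ₁ γ₂ : ℝ} (hγ : γ₁ ≠ γ₂) (h₁ : γ₁ ^ 2 + (a - 1) * γ₁ + b = 0)
    (h₂ : γ₂ ^ 2 + (a - 1) * γ₂ + b = 0) : a = 1 - γ₁ - γ₂ ∧ b = γ₁ * γ₂ := by
  have hsum : a = 1 - γ₁ - γ₂ := by
    have : (γ₂ - γ₁) * (γ₁ + γ₂ + a - 1) = 0 := by linear_combination h₂ - h₁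
    have := (mul_eq_zero.mp this).resolve_left (sub_ne_zero.mpr hγ.symm)
    linarith
  exact ⟨hsum, by subst hsum; linear_combination h₁⟩

theorem ordConnected_Ioi_inter_coe_lt_ereal (B₁ : ℝ) (B₂ : EReal) :
    {r : ℝ | B₁ < r ∧ (r : EReal) < B₂}.OrdConnected :=
  ordConnected_Ioi.inter (ordConnected_Iio.preimage_mono EReal.coe_strictMono.monotone)

/-- **Lemma on Euler-type ODEs with controlled inhomogeneity.**
If the indicial polynomial `x(x-1) + a x + b` has two distinct real roots `γ₁ < γ₂`,
and `f` solves `r² f'' + a r f' + b f = φ` on `(B₁, B₂)` with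
`|φ(r)| ≤ ∑ c_k r^{δ_k}` (`δ_k ∉ {γ₁, γ₂}`), then
`f(r) = A₁ r^{γ₁} + A₂ r^{γ₂} + ∑ O(r^{δ_k})` where the constants in the error terms
depend only on `a`, `b`, `δ_k`, `c_k`. -/
theorem euler_ode_asymptotics :
    ∃ C : ℝ → ℝ → ℝ → ℝ → ℝ,
      ∀ (a b γ₁ γ₂ : ℝ), γ₁ < γ₂ →
      γ₁ ^ 2 + (a - 1) * γ₁ + b = 0 →
      γ₂ ^ 2 + (a - 1) * γ₂ + b = 0 →
      ∀ (p : ℕ) (δ c : Fin p → ℝ),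
      (∀ k, 0 ≤ c k) →
      (∀ k, δ k ≠ γ₁ ∧ δ k ≠ γ₂) →
      ∀ (B₁ : ℝ) (B₂ : EReal), 0 ≤ B₁ → (B₁ : EReal) < B₂ →
      ∀ f f' f'' φ : ℝ → ℝ,
      (∀ r : ℝ, B₁ < r → (r : EReal) < B₂ →
        HasDerivAt f (f' r) r ∧ HasDerivAt f' (f'' r) r ∧
        r ^ 2 * f'' r + a * r * f' r + b * f r = φ r ∧
        |φ r| ≤ ∑ k, c k * r ^ (δ k)) →
      ∃ A₁ A₂ : ℝ, ∀ r : ℝ, B₁ < r → (r : EReal) < B₂ →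
        |f r - A₁ * r ^ γ₁ - A₂ * r ^ γ₂| ≤ ∑ k, C a b (δ k) (c k) * r ^ (δ k) := by
  refine ⟨fun a b d c => c / |d ^ 2 + (a - 1) * d + b|, ?_⟩
  intro a b γ₁ γ₂ hγ h₁ h₂ p δ c hc hδ B₁ B₂ hB₁ _ f f' f'' φ hf
  obtain ⟨rfl, rfl⟩ := vieta_of_ne_roots hγ.ne h₁ h₂
  obtain ⟨A₁, A₂, hA⟩ := exists_abs_sub_le_of_euler_second_order hc hγ.ne hδ
    (ordConnected_Ioi_inter_coe_lt_ereal B₁ B₂) (fun r hr => hB₁.trans_lt hr.1)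
    (fun r hr => (hf r hr.1 hr.2).1) (fun r hr => (hf r hr.1 hr.2).2.1)
    (fun r hr => by
      obtain ⟨-, -, hode, hφ⟩ := hf r hr.1 hr.2
      rwa [hode])
  refine ⟨A₁, A₂, fun r h₁ h₂ => (hA r ⟨h₁, h₂⟩).trans_eq (Finset.sum_congr rfl fun k _ => ?_)⟩
  congr 3
  ring
end

section
/- Let n ≥ 3 be an integer. Suppose h₁₁ : (0,∞) → ℝ, h_{1i} : (0,∞) → ℝ for i = 2, …, n, and h_{ij} = h_{ji} : (0,∞) → ℝ for i, j = 2, …, n are twice differentiable functions satisfying the system: (I) r²·(r²h₁₁)'' + n·r·(r²h₁₁)' − 2(n−1)·(r²h₁₁) = 0; (II) r²·h_{1i}'' + n·r·h_{1i}' − n·h_{1i} = 0 for each i = 2, …, n; (III) r²·(r^{−2}h_{ij})'' + n·r·(r^{−2}h_{ij})' − 2·δ_{ij}·Σ_{k=2}^n r^{−2}h_{kk} = 0 for all i, j = 2, …, n (δ_{ij} the Kronecker delta). Assume the growth bounds r²·|h₁₁(r)| ≤ r^{0.1} + r^{−0.1}, |h_{1i}(r)| ≤ r^{0.1} + r^{−0.1},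 and r^{−2}·|h_{ij}(r)| ≤ r^{0.1} + r^{−0.1} for all r > 0 and all i, j = 2, …, n. Then h₁₁ ≡ 0, h_{1i} ≡ 0 for all i = 2, …, n, and there exists a constant symmetric matrix (u_{ij})_{2 ≤ i,j ≤ n} with Σ_{k=2}^n u_{kk} = 0 such that h_{ij}(r) = u_{ij}·r² for all r > 0 and all i, j = 2, …, n. -/
/-!
Every equation of the system is an Euler equation `r² f'' + a r f' + b f = 0`, whose solutions
on `(0, ∞)` are `A r^q + B r^p` with `p, q` the roots of `x² + (a - 1) x + b`. A bound
`|f| ≤ C (r^ε + r^(-ε))` kills every such power with `|ε| <` its exponent in absolute value, by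
letting `r → ∞` or `r → 0`. For (I), (II) and the trace of (III) both roots lie outside
`[-0.1, 0.1]`, so these vanish; once the trace vanishes, each `r⁻² h_ij` solves an Euler equation
with roots `0` and `1 - n`, and only the constant survives.
-/

open Filter Topology

theorem eq_mul_rpow_of_mul_deriv_eq {g g' : ℝ → ℝ} {p : ℝ}
    (hg : ∀ r > 0, HasDerivAt g (g' r) r) (h : ∀ r > 0, r * g' r = p * g r) :
    ∀ r > 0, g r = g 1 * r ^ p := by
  have hφ : ∀ r > 0, HasDerivAt (fun s => s ^ (-p) * g s) 0 r := by
    intro r hr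
    refine ((Real.hasDerivAt_rpow_const (Or.inl hr.ne')).mul (hg r hr)).congr_deriv ?_
    rw [Real.rpow_sub_one hr.ne', Real.rpow_neg hr.le]
    field_simp
    linear_combination h r hr
  intro r hr
  have hconst : r ^ (-p) * g r = (1 : ℝ) ^ (-p) * g 1 :=
    isOpen_Ioi.is_const_of_deriv_eq_zero isPreconnected_Ioi
      (fun x hx => (hφ x hx).differentiableAt.differentiableWithinAt)
      (fun x hx => (hφ x hx).deriv) (Set.mem_Ioi.2 hr) (Set.mem_Ioi.2 one_pos)
  rw [Real.one_rpow, one_mul, Real.rpow_neg hr.le] at hconst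
  field_simp at hconst
  linear_combination hconst

theorem euler_eq_add_rpow {a b p q : ℝ} (hqp : q ≠ p) (hsum : p + q = 1 - a) (hprod : p * q = b)
    {f f' f'' : ℝ → ℝ} (hf : ∀ r > 0, HasDerivAt f (f' r) r)
    (hf' : ∀ r > 0, HasDerivAt f' (f'' r) r)
    (heq : ∀ r > 0, r ^ 2 * f'' r + a * r * f' r + b * f r = 0) :
    ∃ A B : ℝ, ∀ r > 0, f r = A * r ^ q + B * r ^ p := by
  -- `r f' - q f` solves the first-order Euler equation with exponent `p`
  have hg := eq_mul_rpow_of_mul_deriv_eq (g := fun r => r * f' r - q * f r)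
    (g' := fun r => f' r + r * f'' r - q * f' r) (p := p)
    (fun r hr => by
      simpa only [one_mul] using
        ((hasDerivAt_id' r).fun_mul (hf' r hr)).fun_sub ((hf r hr).const_mul q))
    (fun r hr => by linear_combination heq r hr - r * f' r * hsum + f r * hprod)
  set K := 1 * f' 1 - q * f 1
  have hpq : p - q ≠ 0 := sub_ne_zero.2 hqp.symm
  have hk := eq_mul_rpow_of_mul_deriv_eq (g := fun r => f r - K / (p - q) * r ^ p)
    (g' := fun r => f' r - K / (p - q) * (p * r ^ (p - 1))) (p := q)
    (fun r hr => (hf r hr).sub ((Real.hasDerivAt_rpow_const (Or.inl hr.ne')).const_mul _))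
    (fun r hr => by
      have := hg r hr
      rw [Real.rpow_sub_one hr.ne']
      field_simp
      linear_combination (p - q) * this)
  refine ⟨f 1 - K / (p - q) * 1 ^ p, K / (p - q), fun r hr => ?_⟩
  linear_combination hk r hr

theorem coeff_eq_zero_of_abs_add_rpow_le {ε p q A B C : ℝ} (hε : |ε| < p) (hqp : q < p)
    (hb : ∀ r > 0, |A * r ^ q + B * r ^ p| ≤ C * (r ^ ε + r ^ (-ε))) : B = 0 := by
  have hB_le : ∀ r > (0 : ℝ), |B| ≤ |A| * r ^ (q - p) + C * r ^ (ε - p) + C * r ^ (-ε - p) := by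
    intro r hr
    have hrp := Real.rpow_pos_of_pos hr p
    have hq := Real.rpow_pos_of_pos hr q
    rw [Real.rpow_sub hr, Real.rpow_sub hr, Real.rpow_sub hr, mul_div_assoc', mul_div_assoc',
      mul_div_assoc', ← add_div, ← add_div, le_div_iff₀ hrp]
    calc |B| * r ^ p = |(A * r ^ q + B * r ^ p) - A * r ^ q| := by
          rw [add_sub_cancel_left, abs_mul, abs_of_pos hrp]
      _ ≤ |A * r ^ q + B * r ^ p| + |A * r ^ q| := abs_sub _ _
      _ = |A * r ^ q + B * r ^ p| + |A| * r ^ q := by rw [abs_mul, abs_of_pos hq]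
      _ ≤ _ := by linarith [hb r hr]
  have hlim : Tendsto (fun r : ℝ => |A| * r ^ (q - p) + C * r ^ (ε - p) + C * r ^ (-ε - p))
      atTop (𝓝 0) := by
    have tendsto_rpow (e : ℝ) (he : e < 0) : Tendsto (fun r : ℝ => r ^ e) atTop (𝓝 0) := by
      simpa using tendsto_rpow_neg_atTop (neg_pos.2 he)
    have := (((tendsto_rpow (q - p) (by linarith)).const_mul |A|).add
      ((tendsto_rpow (ε - p) (by linarith [le_abs_self ε])).const_mul C)).add
      ((tendsto_rpow (-ε - p) (by linarith [neg_le_abs ε])).const_mul C)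
    simpa using this
  exact abs_nonpos_iff.1 (ge_of_tendsto hlim ((eventually_gt_atTop 0).mono hB_le))

theorem coeff_eq_zero_of_abs_add_rpow_le' {ε p q A B C : ℝ} (hε : |ε| < -q) (hqp : q < p)
    (hb : ∀ r > 0, |A * r ^ q + B * r ^ p| ≤ C * (r ^ ε + r ^ (-ε))) : A = 0 := by
  refine coeff_eq_zero_of_abs_add_rpow_le (ε := -ε) (p := -q) (q := -p) (A := B) (C := C)
    (by rwa [abs_neg]) (neg_lt_neg hqp) fun r hr => ?_
  have := hb r⁻¹ (inv_pos.2 hr)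
  simp only [Real.inv_rpow hr.le, ← Real.rpow_neg hr.le, neg_neg] at this
  rwa [neg_neg, add_comm (B * _)]

theorem euler_eq_zero_of_abs_le {a b p q ε C : ℝ} (hp : |ε| < p) (hq : |ε| < -q)
    (hsum : p + q = 1 - a) (hprod : p * q = b) {f f' f'' : ℝ → ℝ}
    (hf : ∀ r > 0, HasDerivAt f (f' r) r) (hf' : ∀ r > 0, HasDerivAt f' (f'' r) r)
    (heq : ∀ r > 0, r ^ 2 * f'' r + a * r * f' r + b * f r = 0)
    (hb : ∀ r > 0, |f r| ≤ C * (r ^ ε + r ^ (-ε))) :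
    ∀ r > 0, f r = 0 := by
  have hqp : q < p := by linarith [abs_nonneg ε]
  obtain ⟨A, B, hAB⟩ := euler_eq_add_rpow hqp.ne hsum hprod hf hf' heq
  have hb' : ∀ r > 0, |A * r ^ q + B * r ^ p| ≤ C * (r ^ ε + r ^ (-ε)) := fun r hr =>
    hAB r hr ▸ hb r hr
  intro r hr
  rw [hAB r hr, coeff_eq_zero_of_abs_add_rpow_le hp hqp hb',
    coeff_eq_zero_of_abs_add_rpow_le' hq hqp hb']
  ring

theorem euler_eq_const_of_abs_le {a ε C : ℝ} (ha : |ε| < a - 1) {f f' f'' : ℝ → ℝ}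
    (hf : ∀ r > 0, HasDerivAt f (f' r) r) (hf' : ∀ r > 0, HasDerivAt f' (f'' r) r)
    (heq : ∀ r > 0, r ^ 2 * f'' r + a * r * f' r = 0)
    (hb : ∀ r > 0, |f r| ≤ C * (r ^ ε + r ^ (-ε))) :
    ∀ r > 0, f r = f 1 := by
  have hqp : 1 - a < 0 := by linarith [abs_nonneg ε]
  obtain ⟨A, B, hAB⟩ := euler_eq_add_rpow (b := 0) hqp.ne (by ring) (by ring) hf hf'
    (fun r hr => by linear_combination heq r hr)
  have hb' : ∀ r > 0, |A * r ^ (1 - a) + B * r ^ (0 : ℝ)| ≤ C * (r ^ ε + r ^ (-ε)) :=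
    fun r hr => hAB r hr ▸ hb r hr
  have hA := coeff_eq_zero_of_abs_add_rpow_le' (by linarith) hqp hb'
  intro r hr
  rw [hAB r hr, hAB 1 one_pos, hA]
  simp

theorem exists_indicial_roots {a : ℝ} (ha : 2 < a) :
    ∃ p q : ℝ, 1 < p ∧ q < -1 ∧ p + q = 1 - a ∧ p * q = -(2 * (a - 1)) := by
  set D := (a - 1) ^ 2 + 8 * (a - 1)
  have hD : Real.sqrt D ^ 2 = D := Real.sq_sqrt (by nlinarith)
  have hlt : a + 1 < Real.sqrt D := (Real.lt_sqrt (by linarith)).2 (by nlinarith)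
  exact ⟨(1 - a + Real.sqrt D) / 2, (1 - a - Real.sqrt D) / 2, by linarith, by linarith, by ring,
    by linear_combination (-1 / 4 : ℝ) * hD⟩

theorem euler_eq_zero_of_two_lt {a ε C : ℝ} (ha : 2 < a) (hε : |ε| < 1) {f f' f'' : ℝ → ℝ}
    (hf : ∀ r > 0, HasDerivAt f (f' r) r) (hf' : ∀ r > 0, HasDerivAt f' (f'' r) r)
    (heq : ∀ r > 0, r ^ 2 * f'' r + a * r * f' r - 2 * (a - 1) * f r = 0)
    (hb : ∀ r > 0, |f r| ≤ C * (r ^ ε + r ^ (-ε))) :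
    ∀ r > 0, f r = 0 := by
  obtain ⟨p, q, hp, hq, hsum, hprod⟩ := exists_indicial_roots ha
  exact euler_eq_zero_of_abs_le (by linarith) (by linarith) hsum hprod hf hf'
    (fun r hr => by linear_combination heq r hr) hb

theorem sum_eq_zero_of_euler_trace {ι : Type*} [Fintype ι] {a ε : ℝ} (ha : 2 < a)
    (hcard : (Fintype.card ι : ℝ) = a - 1) (hε : |ε| < 1) {g g' g'' : ι → ℝ → ℝ}
    (hg : ∀ k, ∀ r > 0, HasDerivAt (g k) (g' k r) r)
    (hg' : ∀ k, ∀ r > 0, HasDerivAt (g' k) (g'' k r) r)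
    (heq : ∀ k, ∀ r > 0, r ^ 2 * g'' k r + a * r * g' k r - 2 * ∑ l, g l r = 0)
    (hb : ∀ k, ∀ r > 0, |g k r| ≤ r ^ ε + r ^ (-ε)) :
    ∀ r > 0, ∑ k, g k r = 0 := by
  refine euler_eq_zero_of_two_lt (f' := fun r => ∑ k, g' k r) (f'' := fun r => ∑ k, g'' k r)
    (C := a - 1) ha hε (fun r hr => HasDerivAt.fun_sum fun k _ => hg k r hr)
    (fun r hr => HasDerivAt.fun_sum fun k _ => hg' k r hr) (fun r hr => ?_) (fun r hr => ?_)
  · have := Finset.sum_eq_zero fun k (_ : k ∈ Finset.univ) => heq k r hr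
    rw [Finset.sum_sub_distrib, Finset.sum_add_distrib, Finset.sum_const, Finset.card_univ,
      nsmul_eq_mul, hcard, ← Finset.mul_sum, ← Finset.mul_sum] at this
    linear_combination this
  · calc |∑ k, g k r| ≤ ∑ k, |g k r| := Finset.abs_sum_le_sum_abs _ _
      _ ≤ ∑ _k : ι, (r ^ ε + r ^ (-ε)) := Finset.sum_le_sum fun k _ => hb k r hr
      _ = (a - 1) * (r ^ ε + r ^ (-ε)) := by
        rw [Finset.sum_const, Finset.card_univ, nsmul_eq_mul, hcard]

/-- **Einstein variations of the hyperbolic cusp metric** (Proposition 7.1 of the paper).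
An `ℝ^{n-1}`-invariant solution `h` of the linearized Einstein equation on the hyperbolic
cusp, written in coordinates as the system (I)-(III) for the components
`h₁₁`, `h_{1i}`, `h_{ij}` (`i, j = 2, …, n`, here indexed by `Fin (n-1)`),
with `|h| ≤ r^{0.1} + r^{-0.1}`, is a trivial Einstein variation:
`h₁₁ ≡ 0`, `h_{1i} ≡ 0` and `h_{ij}(r) = u_{ij} r²` for a constant traceless
symmetric matrix `u`. -/
theorem cusp_einstein_variation_trivial (n : ℕ) (hn : 3 ≤ n)
    (h11 : ℝ → ℝ) (h1 : Fin (n - 1) → ℝ → ℝ) (h : Fin (n - 1) → Fin (n - 1) → ℝ → ℝ)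
    (hsym : ∀ i j, h i j = h j i)
    -- (I): the equation for r² h₁₁
    (F' F'' : ℝ → ℝ)
    (hF1 : ∀ r > (0 : ℝ), HasDerivAt (fun s => s ^ 2 * h11 s) (F' r) r)
    (hF2 : ∀ r > (0 : ℝ), HasDerivAt F' (F'' r) r)
    (hI : ∀ r > (0 : ℝ),
      r ^ 2 * F'' r + (n : ℝ) * r * F' r - 2 * ((n : ℝ) - 1) * (r ^ 2 * h11 r) = 0)
    -- (II): the equations for h_{1i}
    (h1' h1'' : Fin (n - 1) → ℝ → ℝ)
    (hd1 : ∀ i, ∀ r > (0 : ℝ), HasDerivAt (h1 i) (h1' i r) r)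
    (hd2 : ∀ i, ∀ r > (0 : ℝ), HasDerivAt (h1' i) (h1'' i r) r)
    (hII : ∀ i, ∀ r > (0 : ℝ),
      r ^ 2 * h1'' i r + (n : ℝ) * r * h1' i r - (n : ℝ) * h1 i r = 0)
    -- (III): the equations for r^{-2} h_{ij}
    (G' G'' : Fin (n - 1) → Fin (n - 1) → ℝ → ℝ)
    (hG1 : ∀ i j, ∀ r > (0 : ℝ), HasDerivAt (fun s => h i j s / s ^ 2) (G' i j r) r)
    (hG2 : ∀ i j, ∀ r > (0 : ℝ), HasDerivAt (G' i j) (G'' i j r) r)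
    (hIII : ∀ i j, ∀ r > (0 : ℝ),
      r ^ 2 * G'' i j r + (n : ℝ) * r * G' i j r
        - 2 * (if i = j then (1 : ℝ) else 0) * (∑ k, h k k r / r ^ 2) = 0)
    -- growth bounds expressing |h| ≤ r^{0.1} + r^{-0.1}
    (hb1 : ∀ r > (0 : ℝ), r ^ 2 * |h11 r| ≤ r ^ (0.1 : ℝ) + r ^ (-0.1 : ℝ))
    (hb2 : ∀ i, ∀ r > (0 : ℝ), |h1 i r| ≤ r ^ (0.1 : ℝ) + r ^ (-0.1 : ℝ))
    (hb3 : ∀ i j, ∀ r > (0 : ℝ), |h i j r| / r ^ 2 ≤ r ^ (0.1 : ℝ) + r ^ (-0.1 : ℝ)) :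
    (∀ r > (0 : ℝ), h11 r = 0)
    ∧ (∀ i, ∀ r > (0 : ℝ), h1 i r = 0)
    ∧ ∃ u : Fin (n - 1) → Fin (n - 1) → ℝ,
        (∀ i j, u i j = u j i) ∧ (∑ k, u k k = 0) ∧
        ∀ i j, ∀ r > (0 : ℝ), h i j r = u i j * r ^ 2 := by
  have ha : (2 : ℝ) < n := by exact_mod_cast hn
  have hε : |(0.1 : ℝ)| < 1 := by norm_num [abs_of_pos]
  have hcard : (Fintype.card (Fin (n - 1)) : ℝ) = n - 1 := by
    simp [Nat.cast_sub (by omega : 1 ≤ n)]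
  have hbG : ∀ i j, ∀ r > (0 : ℝ), |h i j r / r ^ 2| ≤ r ^ (0.1 : ℝ) + r ^ (-0.1 : ℝ) :=
    fun i j r hr => by rw [abs_div, abs_sq]; exact hb3 i j r hr
  have htrace : ∀ r > (0 : ℝ), ∑ k, h k k r / r ^ 2 = 0 :=
    sum_eq_zero_of_euler_trace ha hcard hε (fun k => hG1 k k) (fun k => hG2 k k)
      (fun k r hr => by simpa using hIII k k r hr) (fun k => hbG k k)
  have hconst : ∀ i j, ∀ r > (0 : ℝ), h i j r / r ^ 2 = h i j 1 / 1 ^ 2 := fun i j =>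
    euler_eq_const_of_abs_le (a := n) (ε := 0.1) (C := 1) (by linarith) (hG1 i j) (hG2 i j)
      (fun r hr => by simpa [htrace r hr] using hIII i j r hr) (by simpa using hbG i j)
  refine ⟨fun r hr => ?_, fun i => ?_, fun i j => h i j 1, fun i j => congrFun (hsym i j) 1,
    by simpa using htrace 1 one_pos, fun i j r hr => ?_⟩
  · have := euler_eq_zero_of_two_lt (C := 1) ha hε hF1 hF2 hI
      (fun r hr => by rw [abs_mul, abs_sq, one_mul]; exact hb1 r hr) r hr
    exact (mul_eq_zero.1 this).resolve_left (by positivity)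
  · exact euler_eq_zero_of_abs_le (a := n) (b := -n) (p := 1) (q := -n) (C := 1) hε
      (by linarith) (by ring) (by ring) (hd1 i) (hd2 i)
      (fun r hr => by linear_combination hII i r hr) (by simpa using hb2 i)
  · have := hconst i j r hr
    field_simp at this
    linear_combination this
end

section
/- Let n ≥ 3 be an integer, set a := 2^{1/(n−1)} + 1 and γ₁ := (1 − n + √(n² + 6n − 7))/2, and fix constants c ≥ 0 and B ≥ 0. There exists a constant C, depending only on n, c and B, with the following property: for every R ≥ a + 1, every α > 0, and every twice differentiable f : [a, R] → ℝ satisfying r²·f''(r) + n·r·f'(r) − 2(n−1)·f(r) = φ(r) on [a, R], where |φ(r)| ≤ α·((r/R)^{0.1} + r^{−0.1}) + c·r^{1−n}, and satisfying |f(r)| ≤ B for all r ∈ [a, a+1], one has |f(r)| ≤ C·(|f(R)|·(r/R)^{γ₁} + α·(r/R)^{0.1} + α·r^{−0.1} + r^{1−n}) for all r ∈ [a, R]. In particular |f(r)| ≤ C·(|f(R)| + α + r^{1−n}). -/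
/-!
The indicial polynomial of `L = r² ∂² + n r ∂ - 2(n - 1)` is `χ(e) = e (e - 1) + n e - 2(n - 1)`.
Its positive root is `γ₁`, while `χ(±0.1) ≤ -1` and `χ(1 - n) = -2(n - 1)`, so
`v = M (|f R| (r/R)^γ₁ + α (r/R)^0.1 + α r^(-0.1) + r^(1-n))` satisfies `L v ≤ -|φ|` for
`M ≥ 1 + c`, and `v` dominates `|f|` at `r = a` and `r = R` once moreover `M ≥ B a^(n-1)`.
As the zeroth-order coefficient of `L` is negative, the minimum principle applied to `v ± f`
gives `|f| ≤ v` on `[a, R]`, with `M` independent of `R` and `α`.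
-/

open Set Filter Topology Finset

theorem IsLocalMin.nonneg_of_hasDerivAt_hasDerivAt {w w' : ℝ → ℝ} {x w'' : ℝ}
    (hmin : IsLocalMin w x) (hw : ∀ᶠ y in 𝓝 x, HasDerivAt w (w' y) y)
    (hw' : HasDerivAt w' w'' x) : 0 ≤ w'' := by
  -- otherwise the second-derivative test makes `x` a local maximum as well, so `w` is flat
  -- near `x` and `w'' = 0`
  by_contra! hneg
  have hderiv : deriv w =ᶠ[𝓝 x] w' := hw.mono fun y hy => hy.deriv
  have hcrit : deriv w x = 0 := hmin.deriv_eq_zero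
  have hmax : IsLocalMax w x :=
    isLocalMax_of_deriv_deriv_neg (by rwa [hderiv.deriv_eq, hw'.deriv]) hcrit
      hw.self_of_nhds.continuousAt
  have hflat : w =ᶠ[𝓝 x] fun _ => w x := by
    filter_upwards [hmin, hmax] with y h₁ h₂ using le_antisymm h₂ h₁
  have hzero : w' =ᶠ[𝓝 x] fun _ => 0 := by
    filter_upwards [hderiv, hflat.deriv] with y h₁ h₂
    rw [← h₁, h₂, deriv_const]
  have := (hw'.congr_of_eventuallyEq hzero.symm).unique (hasDerivAt_const x 0)
  linarith

theorem nonneg_of_supersolution {a b : ℝ} {p q k w w' w'' : ℝ → ℝ} (hab : a ≤ b)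
    (hp : ∀ x ∈ Ioo a b, 0 ≤ p x) (hk : ∀ x ∈ Ioo a b, 0 < k x)
    (hwc : ContinuousOn w (Icc a b)) (hw : ∀ x ∈ Ioo a b, HasDerivAt w (w' x) x)
    (hw' : ∀ x ∈ Ioo a b, HasDerivAt w' (w'' x) x)
    (hL : ∀ x ∈ Ioo a b, p x * w'' x + q x * w' x - k x * w x ≤ 0)
    (ha : 0 ≤ w a) (hb : 0 ≤ w b) : ∀ x ∈ Icc a b, 0 ≤ w x := by
  obtain ⟨x₀, hx₀, hmin⟩ := isCompact_Icc.exists_isMinOn (nonempty_Icc.mpr hab) hwc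
  intro x hx
  refine le_trans ?_ (hmin hx)
  by_contra! hneg
  have hx₀' : x₀ ∈ Ioo a b :=
    ⟨hx₀.1.lt_of_ne (by rintro rfl; linarith), hx₀.2.lt_of_ne (by rintro rfl; linarith)⟩
  have hnhds : Ioo a b ∈ 𝓝 x₀ := Ioo_mem_nhds hx₀'.1 hx₀'.2
  have hloc : IsLocalMin w x₀ := hmin.isLocalMin (mem_of_superset hnhds Ioo_subset_Icc_self)
  have hcrit : w' x₀ = 0 := hloc.hasDerivAt_eq_zero (hw x₀ hx₀')
  have hconvex : 0 ≤ w'' x₀ :=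
    hloc.nonneg_of_hasDerivAt_hasDerivAt (eventually_of_mem hnhds hw) (hw' x₀ hx₀')
  have := hL x₀ hx₀'
  rw [hcrit] at this
  nlinarith [mul_nonneg (hp x₀ hx₀') hconvex, hk x₀ hx₀']

theorem abs_le_of_supersolution {a b : ℝ} {p q k f f' f'' v v' v'' : ℝ → ℝ} (hab : a ≤ b)
    (hp : ∀ x ∈ Ioo a b, 0 ≤ p x) (hk : ∀ x ∈ Ioo a b, 0 < k x)
    (hfc : ContinuousOn f (Icc a b)) (hf : ∀ x ∈ Ioo a b, HasDerivAt f (f' x) x)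
    (hf' : ∀ x ∈ Ioo a b, HasDerivAt f' (f'' x) x)
    (hvc : ContinuousOn v (Icc a b)) (hv : ∀ x ∈ Ioo a b, HasDerivAt v (v' x) x)
    (hv' : ∀ x ∈ Ioo a b, HasDerivAt v' (v'' x) x)
    (hL : ∀ x ∈ Ioo a b,
      p x * v'' x + q x * v' x - k x * v x + |p x * f'' x + q x * f' x - k x * f x| ≤ 0)
    (ha : |f a| ≤ v a) (hb : |f b| ≤ v b) : ∀ x ∈ Icc a b, |f x| ≤ v x := by
  have hσ : ∀ σ : ℝ, |σ| = 1 → ∀ x ∈ Icc a b, 0 ≤ v x + σ * f x := by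
    intro σ hσ
    have hσL : ∀ y, |σ * y| = |y| := fun y => by rw [abs_mul, hσ, one_mul]
    refine nonneg_of_supersolution (q := q) hab hp hk (hvc.add (hfc.const_smul σ))
      (fun x hx => (hv x hx).add ((hf x hx).const_mul σ))
      (fun x hx => (hv' x hx).add ((hf' x hx).const_mul σ)) (fun x hx => ?_) ?_ ?_
    · linarith [hL x hx, le_abs_self (σ * (p x * f'' x + q x * f' x - k x * f x)),
        hσL (p x * f'' x + q x * f' x - k x * f x)]
    · linarith [neg_abs_le (σ * f a), hσL (f a)]
    · linarith [neg_abs_le (σ * f b), hσL (f b)]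
  intro x hx
  have h₁ := hσ 1 abs_one x hx
  have h₂ := hσ (-1) (by simp) x hx
  exact abs_le.mpr ⟨by linarith, by linarith⟩

def eulerIndicial (N K e : ℝ) : ℝ := e * (e - 1) + N * e - K

section PowerSum

variable {ι : Type*} (s : Finset ι) (A e : ι → ℝ) {x : ℝ}

theorem hasDerivAt_sum_mul_rpow (hx : 0 < x) :
    HasDerivAt (fun y => ∑ i ∈ s, A i * y ^ e i) (∑ i ∈ s, A i * e i * x ^ (e i - 1)) x := by
  refine HasDerivAt.fun_sum fun i _ => ?_
  simpa only [mul_assoc] using (Real.hasDerivAt_rpow_const (Or.inl hx.ne')).const_mul (A i)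

theorem euler_sum_mul_rpow (hx : 0 < x) (N K : ℝ) :
    x ^ 2 * ∑ i ∈ s, A i * e i * (e i - 1) * x ^ (e i - 1 - 1)
        + N * x * ∑ i ∈ s, A i * e i * x ^ (e i - 1) - K * ∑ i ∈ s, A i * x ^ e i
      = ∑ i ∈ s, A i * eulerIndicial N K (e i) * x ^ e i := by
  simp only [mul_sum, ← sum_add_distrib, ← sum_sub_distrib]
  refine sum_congr rfl fun i _ => ?_
  rw [Real.rpow_sub_one hx.ne', Real.rpow_sub_one hx.ne', eulerIndicial]
  field_simp

end PowerSum

theorem eulerIndicial_eq_zero {N : ℝ} (hN : 1 ≤ N) :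
    eulerIndicial N (2 * (N - 1)) ((1 - N + √(N ^ 2 + 6 * N - 7)) / 2) = 0 := by
  have := Real.sq_sqrt (show 0 ≤ N ^ 2 + 6 * N - 7 by nlinarith)
  rw [eulerIndicial]
  linear_combination this / 4

theorem eulerIndicial_le_neg_one {N e : ℝ} (hN : 3 ≤ N) (he : |e| ≤ 1) :
    eulerIndicial N (2 * (N - 1)) e ≤ -1 := by
  rw [abs_le] at he
  rw [eulerIndicial]
  nlinarith

theorem eulerIndicial_one_sub (N K : ℝ) : eulerIndicial N K (1 - N) = -K := by
  rw [eulerIndicial]; ring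

theorem one_sub_add_sqrt_div_two_nonneg {N : ℝ} (hN : 1 ≤ N) :
    0 ≤ (1 - N + √(N ^ 2 + 6 * N - 7)) / 2 := by
  have : √((N - 1) ^ 2) ≤ √(N ^ 2 + 6 * N - 7) := Real.sqrt_le_sqrt (by nlinarith)
  rw [Real.sqrt_sq (by linarith)] at this
  linarith

noncomputable def radialBarrier (N γ R K α r : ℝ) : ℝ :=
  K * (r / R) ^ γ + α * (r / R) ^ (0.1 : ℝ) + α * r ^ (-0.1 : ℝ) + r ^ (1 - N)

theorem radialBarrier_eq_sum {N γ R K α r : ℝ} (hR : 0 < R) (hr : 0 ≤ r) :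
    radialBarrier N γ R K α r = ∑ i : Fin 4,
      ![K / R ^ γ, α / R ^ (0.1 : ℝ), α, 1] i * r ^ ![γ, 0.1, -0.1, 1 - N] i := by
  simp [radialBarrier, Fin.sum_univ_four, Real.div_rpow hr hR.le]
  ring

theorem exists_radialBarrier_derivs {N γ R K α M c : ℝ} (hN : 3 ≤ N)
    (hγ : γ = (1 - N + √(N ^ 2 + 6 * N - 7)) / 2) (hR : 0 < R) (hα : 0 ≤ α)
    (hM : 1 ≤ M) (hMc : c ≤ M) :
    ∃ v' v'' : ℝ → ℝ, ∀ x, 0 < x →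
      HasDerivAt (fun r => M * radialBarrier N γ R K α r) (v' x) x ∧ HasDerivAt v' (v'' x) x ∧
      x ^ 2 * v'' x + N * x * v' x - 2 * (N - 1) * (M * radialBarrier N γ R K α x)
        + (α * ((x / R) ^ (0.1 : ℝ) + x ^ (-0.1 : ℝ)) + c * x ^ (1 - N)) ≤ 0 := by
  set A : Fin 4 → ℝ := ![K / R ^ γ, α / R ^ (0.1 : ℝ), α, 1] with hA
  set e : Fin 4 → ℝ := ![γ, 0.1, -0.1, 1 - N] with he
  refine ⟨fun y => M * ∑ i, A i * e i * y ^ (e i - 1),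
    fun y => M * ∑ i, A i * e i * (e i - 1) * y ^ (e i - 1 - 1), fun x hx => ⟨?_, ?_, ?_⟩⟩
  · refine ((hasDerivAt_sum_mul_rpow _ A e hx).const_mul M).congr_of_eventuallyEq ?_
    filter_upwards [Ioi_mem_nhds hx] with y hy
    rw [radialBarrier_eq_sum hR (le_of_lt hy)]
  · exact (hasDerivAt_sum_mul_rpow _ (fun i => A i * e i) (fun i => e i - 1) hx).const_mul M
  · have hsum := euler_sum_mul_rpow univ A e hx N (2 * (N - 1))
    have hχ₁ : M * eulerIndicial N (2 * (N - 1)) 0.1 ≤ -1 := by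
      nlinarith [eulerIndicial_le_neg_one hN (e := 0.1) (by norm_num [abs_le])]
    have hχ₂ : M * eulerIndicial N (2 * (N - 1)) (-0.1) ≤ -1 := by
      nlinarith [eulerIndicial_le_neg_one hN (e := -0.1) (by norm_num [abs_le])]
    have hχ₃ : M * -(2 * (N - 1)) ≤ -c := by nlinarith
    have hP₁ : 0 ≤ α / R ^ (0.1 : ℝ) * x ^ (0.1 : ℝ) := by positivity
    have hP₂ : 0 ≤ α * x ^ (-0.1 : ℝ) := by positivity
    have hP₃ : 0 ≤ x ^ (1 - N) := by positivity
    calc _ = M * ∑ i, A i * eulerIndicial N (2 * (N - 1)) (e i) * x ^ e i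
          + (α * ((x / R) ^ (0.1 : ℝ) + x ^ (-0.1 : ℝ)) + c * x ^ (1 - N)) := by
          rw [radialBarrier_eq_sum hR hx.le, ← hA, ← he, ← hsum]; ring
      _ ≤ 0 := by
        simp only [Fin.sum_univ_four, A, e, Matrix.cons_val]
        rw [hγ, eulerIndicial_eq_zero (by linarith), eulerIndicial_one_sub,
          Real.div_rpow hx.le hR.le]
        linear_combination mul_le_mul_of_nonneg_right hχ₁ hP₁ + mul_le_mul_of_nonneg_right hχ₂ hP₂
          + mul_le_mul_of_nonneg_right hχ₃ hP₃

theorem rpow_one_sub_le_radialBarrier {N γ R K α r : ℝ} (hR : 0 < R) (hK : 0 ≤ K) (hα : 0 ≤ α)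
    (hr : 0 < r) : r ^ (1 - N) ≤ radialBarrier N γ R K α r := by
  unfold radialBarrier
  have : 0 ≤ K * (r / R) ^ γ + α * (r / R) ^ (0.1 : ℝ) + α * r ^ (-0.1 : ℝ) := by positivity
  linarith

theorem le_radialBarrier_self {N γ R K α : ℝ} (hR : 0 < R) (hα : 0 ≤ α) :
    K ≤ radialBarrier N γ R K α R := by
  unfold radialBarrier
  rw [div_self hR.ne', Real.one_rpow, Real.one_rpow]
  have : 0 ≤ α * R ^ (-0.1 : ℝ) + R ^ (1 - N) := by positivity
  linarith

theorem radialBarrier_le {N γ R K α r : ℝ} (hγ : 0 ≤ γ) (hK : 0 ≤ K) (hα : 0 ≤ α) (hr : 1 ≤ r)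
    (hrR : r ≤ R) : radialBarrier N γ R K α r ≤ 2 * (K + α + r ^ (1 - N)) := by
  have hR : 0 < R := by linarith
  have hq₀ : 0 ≤ r / R := by positivity
  have hq₁ : r / R ≤ 1 := div_le_one_of_le₀ hrR hR.le
  have h₁ := mul_le_of_le_one_right hK (Real.rpow_le_one hq₀ hq₁ hγ)
  have h₂ := mul_le_of_le_one_right hα (Real.rpow_le_one hq₀ hq₁ (by norm_num : (0 : ℝ) ≤ 0.1))
  have h₃ := mul_le_of_le_one_right hα
    (Real.rpow_le_one_of_one_le_of_nonpos hr (by norm_num : (-0.1 : ℝ) ≤ 0))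
  have : 0 ≤ r ^ (1 - N) := by positivity
  unfold radialBarrier
  linarith

theorem abs_le_mul_radialBarrier {N γ a R α c M : ℝ} {f f' f'' φ : ℝ → ℝ} (hN : 3 ≤ N)
    (hγ : γ = (1 - N + √(N ^ 2 + 6 * N - 7)) / 2) (ha : 0 < a) (haR : a ≤ R) (hα : 0 ≤ α)
    (hM : 1 ≤ M) (hMc : c ≤ M)
    (hf : ∀ r ∈ Icc a R, HasDerivWithinAt f (f' r) (Icc a R) r)
    (hf' : ∀ r ∈ Icc a R, HasDerivWithinAt f' (f'' r) (Icc a R) r)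
    (heq : ∀ r ∈ Icc a R, r ^ 2 * f'' r + N * r * f' r - 2 * (N - 1) * f r = φ r)
    (hφ : ∀ r ∈ Icc a R, |φ r| ≤ α * ((r / R) ^ (0.1 : ℝ) + r ^ (-0.1 : ℝ)) + c * r ^ (1 - N))
    (hfa : |f a| ≤ M * a ^ (1 - N)) :
    ∀ r ∈ Icc a R, |f r| ≤ M * radialBarrier N γ R |f R| α r := by
  have hR : 0 < R := ha.trans_le haR
  have hpos : ∀ x ∈ Icc a R, 0 < x := fun x hx => ha.trans_le hx.1
  have hderiv {g g' : ℝ → ℝ} (hg : ∀ x ∈ Icc a R, HasDerivWithinAt g (g' x) (Icc a R) x) :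
      ∀ x ∈ Ioo a R, HasDerivAt g (g' x) x := fun x hx =>
    (hg x (Ioo_subset_Icc_self hx)).hasDerivAt (Icc_mem_nhds hx.1 hx.2)
  obtain ⟨v', v'', hv⟩ := exists_radialBarrier_derivs hN hγ hR hα (K := |f R|) hM hMc
  have hv₀ : ∀ x ∈ Ioo a R, _ := fun x hx => hv x (hpos x (Ioo_subset_Icc_self hx))
  refine abs_le_of_supersolution (p := fun x => x ^ 2) (q := fun x => N * x)
    (k := fun _ => 2 * (N - 1)) haR (fun x _ => sq_nonneg x) (fun _ _ => by linarith)
    (fun x hx => (hf x hx).continuousWithinAt) (hderiv hf) (hderiv hf')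
    (fun x hx => (hv x (hpos x hx)).1.continuousAt.continuousWithinAt)
    (fun x hx => (hv₀ x hx).1) (fun x hx => (hv₀ x hx).2.1) (fun x hx => ?_) ?_ ?_
  · rw [heq x (Ioo_subset_Icc_self hx)]
    linarith [(hv₀ x hx).2.2, hφ x (Ioo_subset_Icc_self hx)]
  · nlinarith [rpow_one_sub_le_radialBarrier (N := N) (γ := γ) hR (abs_nonneg (f R)) hα ha]
  · nlinarith [le_radialBarrier_self (N := N) (γ := γ) (K := |f R|) hR hα, abs_nonneg (f R)]

/-- **A priori estimate for the radial equation of `r² h₁₁`** on the black-hole manifold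
`M_BH(r ≤ R)`: solutions `f` of `r² f'' + n r f' - 2(n-1) f = φ` on `[a, R]` with
`|φ(r)| ≤ α((r/R)^{0.1} + r^{-0.1}) + c r^{1-n}` and `|f| ≤ B` on `[a, a+1]` satisfy
`|f(r)| ≤ C(|f(R)| (r/R)^{γ₁} + α (r/R)^{0.1} + α r^{-0.1} + r^{1-n})`, in particular
`|f(r)| ≤ C(|f(R)| + α + r^{1-n})`, with `C` independent of `R` and `α`. -/
theorem apriori_estimate_radial (n : ℕ) (hn : 3 ≤ n) (a γ₁ : ℝ)
    (ha : a = (2 : ℝ) ^ ((1 : ℝ) / ((n : ℝ) - 1)) + 1)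
    (hγ₁ : γ₁ = (1 - (n : ℝ) + Real.sqrt ((n : ℝ) ^ 2 + 6 * (n : ℝ) - 7)) / 2)
    (c B : ℝ) (hc : 0 ≤ c) (hB : 0 ≤ B) :
    ∃ C : ℝ, ∀ R : ℝ, a + 1 ≤ R → ∀ α : ℝ, 0 < α →
      ∀ f f' f'' φ : ℝ → ℝ,
      (∀ r ∈ Set.Icc a R, HasDerivWithinAt f (f' r) (Set.Icc a R) r) →
      (∀ r ∈ Set.Icc a R, HasDerivWithinAt f' (f'' r) (Set.Icc a R) r) →
      (∀ r ∈ Set.Icc a R,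
        r ^ 2 * f'' r + (n : ℝ) * r * f' r - 2 * ((n : ℝ) - 1) * f r = φ r) →
      (∀ r ∈ Set.Icc a R,
        |φ r| ≤ α * ((r / R) ^ (0.1 : ℝ) + r ^ (-0.1 : ℝ)) + c * r ^ (1 - (n : ℝ))) →
      (∀ r ∈ Set.Icc a (a + 1), |f r| ≤ B) →
      ∀ r ∈ Set.Icc a R,
        |f r| ≤ C * (|f R| * (r / R) ^ γ₁ + α * (r / R) ^ (0.1 : ℝ)
            + α * r ^ (-0.1 : ℝ) + r ^ (1 - (n : ℝ)))
        ∧ |f r| ≤ C * (|f R| + α + r ^ (1 - (n : ℝ))) := by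
  have hn' : (3 : ℝ) ≤ n := by exact_mod_cast hn
  have ha₁ : 1 < a := by rw [ha]; linarith [Real.rpow_pos_of_pos two_pos ((1 : ℝ) / ((n : ℝ) - 1))]
  set M := 1 + c + B * a ^ ((n : ℝ) - 1)
  have hBa : 0 ≤ B * a ^ ((n : ℝ) - 1) := by positivity
  have hBM : B ≤ M * a ^ (1 - (n : ℝ)) := by
    have : a ^ ((n : ℝ) - 1) * a ^ (1 - (n : ℝ)) = 1 := by
      rw [← Real.rpow_add (by linarith)]; simp
    nlinarith [Real.rpow_pos_of_pos (by linarith : 0 < a) (1 - (n : ℝ))]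
  refine ⟨2 * M, fun R hR α hα f f' f'' φ hf hf' heq hφ hfB r hr => ?_⟩
  have hfa : |f a| ≤ M * a ^ (1 - (n : ℝ)) := (hfB a (left_mem_Icc.mpr (by linarith))).trans hBM
  have hfv := abs_le_mul_radialBarrier hn' hγ₁ (by linarith) (by linarith) hα.le
    (by linarith) (by linarith) hf hf' heq hφ hfa r hr
  have hbound := radialBarrier_le (N := n) (hγ₁ ▸ one_sub_add_sqrt_div_two_nonneg (by linarith))
    (abs_nonneg (f R)) hα.le (by linarith [hr.1]) hr.2
  refine ⟨?_, ?_⟩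
  · change |f r| ≤ 2 * M * radialBarrier n γ₁ R |f R| α r
    linarith [abs_nonneg (f r)]
  · nlinarith [mul_le_mul_of_nonneg_left hbound (by linarith : 0 ≤ M)]
end

section
/- Let n ≥ 3 be an integer, set a := 2^{1/(n−1)} + 1 and γ₁ := (1 − n + √(n² + 6n − 7))/2, and fix constants c ≥ 0 and B ≥ 0. There exists a constant C, depending only on n, c and B, with the following property: for every R ≥ a + 1, all α, H > 0, and every twice differentiable g : [a, R] → ℝ satisfying r²·g''(r) + n·r·g'(r) = ψ(r) on [a, R], where |ψ(r)| ≤ H·(r/R)^{γ₁} + α·((r/R)^{0.1} + r^{−0.1}) + c·r^{1.1−n}, and satisfying |g(r)| ≤ B for all r ∈ [a, a+1], one has |g(r)| ≤ C·(|g(R)| + H + α + r^{1.1−n}) for all r ∈ [a, R]. -/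
/-!
On `[a, R]` with `a > 0` the Cauchy–Euler operator `L u = r² u'' + m r u'` obeys a maximum
principle: `(r^m u')' = r^(m-2) L u`, so for `L u ≥ 0` the derivative `u'` changes sign at most
once, from `-` to `+`, and `u` is maximal at an endpoint. Hence `|g| ≤ w` for any barrier `w`
with `L w ≤ -|L g|` that dominates `|g|` at both endpoints. Since `L r^p = p (p + m - 1) r^p`,
every power in the bound on `ψ` is absorbed by a multiple of itself, and the homogeneous
solution `r^(1-m)` carries the boundary value at `a`; `R` only enters through `(r/R)^p ≤ 1`,
which is why the constants do not depend on it.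
-/

open Set

theorem le_max_of_monotoneOn_mul_deriv {a b : ℝ} {u u' k : ℝ → ℝ}
    (hu : ∀ x ∈ Icc a b, HasDerivWithinAt u (u' x) (Icc a b) x)
    (hk : ∀ x ∈ Icc a b, 0 < k x) (hmono : MonotoneOn (fun x => k x * u' x) (Icc a b)) :
    ∀ x ∈ Icc a b, u x ≤ max (u a) (u b) := by
  intro x hx
  have hcont : ContinuousOn u (Icc a b) := fun y hy => (hu y hy).continuousWithinAt
  have hderiv : ∀ {c d : ℝ}, Icc c d ⊆ Icc a b →
      ∀ y ∈ interior (Icc c d), HasDerivWithinAt u (u' y) (interior (Icc c d)) y :=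
    fun hcd y hy => (hu y (hcd (interior_subset hy))).mono (interior_subset.trans hcd)
  rcases le_or_gt (k x * u' x) 0 with hneg | hpos
  · have hsub : Icc a x ⊆ Icc a b := Icc_subset_Icc_right hx.2
    have hanti : AntitoneOn u (Icc a x) :=
      antitoneOn_of_hasDerivWithinAt_nonpos (convex_Icc a x) (hcont.mono hsub) (hderiv hsub)
        fun y hy => by
          rw [interior_Icc] at hy
          have hy' : y ∈ Icc a b := hsub (Ioo_subset_Icc_self hy)
          exact nonpos_of_mul_nonpos_right ((hmono hy' hx hy.2.le).trans hneg) (hk y hy')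
    exact (hanti (left_mem_Icc.2 hx.1) (right_mem_Icc.2 hx.1) hx.1).trans (le_max_left _ _)
  · have hsub : Icc x b ⊆ Icc a b := Icc_subset_Icc_left hx.1
    have hmono' : MonotoneOn u (Icc x b) :=
      monotoneOn_of_hasDerivWithinAt_nonneg (convex_Icc x b) (hcont.mono hsub) (hderiv hsub)
        fun y hy => by
          rw [interior_Icc] at hy
          have hy' : y ∈ Icc a b := hsub (Ioo_subset_Icc_self hy)
          exact nonneg_of_mul_nonneg_right (hpos.le.trans (hmono hx hy' hy.1.le)) (hk y hy')
    exact (hmono' (left_mem_Icc.2 hx.2) (right_mem_Icc.2 hx.2) hx.2).trans (le_max_right _ _)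

def HasEulerOpOn (m : ℝ) (u f : ℝ → ℝ) (s : Set ℝ) : Prop :=
  ∃ u' u'' : ℝ → ℝ, ∀ r ∈ s, HasDerivWithinAt u (u' r) s r ∧
    HasDerivWithinAt u' (u'' r) s r ∧ r ^ 2 * u'' r + m * r * u' r = f r

theorem hasEulerOpOn_const (m c : ℝ) (s : Set ℝ) : HasEulerOpOn m (fun _ => c) 0 s :=
  ⟨0, 0, fun _ _ => ⟨hasDerivWithinAt_const _ _ c, hasDerivWithinAt_const _ _ 0, by simp⟩⟩

theorem hasEulerOpOn_rpow (m p : ℝ) {s : Set ℝ} (hs : s ⊆ Ioi 0) :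
    HasEulerOpOn m (fun r => r ^ p) (fun r => p * (p + m - 1) * r ^ p) s := by
  refine ⟨fun r => p * r ^ (p - 1), fun r => p * ((p - 1) * r ^ (p - 1 - 1)), fun r hr => ?_⟩
  have hr0 : r ≠ 0 := (hs hr).ne'
  refine ⟨(Real.hasDerivAt_rpow_const (Or.inl hr0)).hasDerivWithinAt,
    ((Real.hasDerivAt_rpow_const (Or.inl hr0)).const_mul p).hasDerivWithinAt, ?_⟩
  beta_reduce
  rw [Real.rpow_sub_one hr0, Real.rpow_sub_one hr0]
  field_simp
  ring

namespace HasEulerOpOn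

variable {m : ℝ} {u v f h : ℝ → ℝ} {s : Set ℝ}

theorem congr (hu : HasEulerOpOn m u f s) (huv : EqOn u v s) (hfh : EqOn f h s) :
    HasEulerOpOn m v h s := by
  obtain ⟨u', u'', hu⟩ := hu
  refine ⟨u', u'', fun r hr => ?_⟩
  obtain ⟨h₁, h₂, h₃⟩ := hu r hr
  exact ⟨h₁.congr_of_mem (fun x hx => (huv hx).symm) hr, h₂, h₃.trans (hfh hr)⟩

theorem add (hu : HasEulerOpOn m u f s) (hv : HasEulerOpOn m v h s) :
    HasEulerOpOn m (fun r => u r + v r) (fun r => f r + h r) s := by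
  obtain ⟨u', u'', hu⟩ := hu
  obtain ⟨v', v'', hv⟩ := hv
  refine ⟨fun r => u' r + v' r, fun r => u'' r + v'' r, fun r hr => ?_⟩
  obtain ⟨hu₁, hu₂, hu₃⟩ := hu r hr
  obtain ⟨hv₁, hv₂, hv₃⟩ := hv r hr
  exact ⟨hu₁.add hv₁, hu₂.add hv₂, by beta_reduce; rw [← hu₃, ← hv₃]; ring⟩

theorem const_mul (c : ℝ) (hu : HasEulerOpOn m u f s) :
    HasEulerOpOn m (fun r => c * u r) (fun r => c * f r) s := by
  obtain ⟨u', u'', hu⟩ := hu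
  refine ⟨fun r => c * u' r, fun r => c * u'' r, fun r hr => ?_⟩
  obtain ⟨h₁, h₂, h₃⟩ := hu r hr
  exact ⟨h₁.const_mul c, h₂.const_mul c, by beta_reduce; rw [← h₃]; ring⟩

theorem le_max {a b : ℝ} (ha : 0 < a) (hu : HasEulerOpOn m u f (Icc a b))
    (hf : ∀ r ∈ Icc a b, 0 ≤ f r) : ∀ r ∈ Icc a b, u r ≤ max (u a) (u b) := by
  obtain ⟨u', u'', hu⟩ := hu
  have hpos : ∀ r ∈ Icc a b, 0 < r := fun r hr => ha.trans_le hr.1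
  refine le_max_of_monotoneOn_mul_deriv (fun r hr => (hu r hr).1)
    (fun r hr => Real.rpow_pos_of_pos (hpos r hr) m) ?_
  have hderiv : ∀ r ∈ Icc a b, HasDerivWithinAt (fun r => r ^ m * u' r)
      (r ^ (m - 1 - 1) * f r) (Icc a b) r := by
    intro r hr
    obtain ⟨-, h₂, h₃⟩ := hu r hr
    have hr0 : r ≠ 0 := (hpos r hr).ne'
    refine (((Real.hasDerivAt_rpow_const (Or.inl hr0)).hasDerivWithinAt).mul h₂).congr_deriv ?_
    rw [← h₃, Real.rpow_sub_one hr0 (m - 1), Real.rpow_sub_one hr0 m]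
    field_simp
    ring
  refine monotoneOn_of_hasDerivWithinAt_nonneg (convex_Icc a b)
    (fun r hr => (hderiv r hr).continuousWithinAt)
    (fun r hr => (hderiv r (interior_subset hr)).mono interior_subset) fun r hr => ?_
  have hr := interior_subset hr
  exact mul_nonneg (Real.rpow_nonneg (hpos r hr).le _) (hf r hr)

theorem abs_le_of_barrier {a b : ℝ} {g ψ w F : ℝ → ℝ} (ha : 0 < a)
    (hg : HasEulerOpOn m g ψ (Icc a b)) (hw : HasEulerOpOn m w F (Icc a b))
    (hψ : ∀ r ∈ Icc a b, |ψ r| ≤ -F r) (hga : |g a| ≤ w a) (hgb : |g b| ≤ w b) :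
    ∀ r ∈ Icc a b, |g r| ≤ w r := by
  intro r hr
  have hle : g r + -1 * w r ≤ 0 := ((hg.add (hw.const_mul (-1))).le_max ha
    (fun x hx => by linarith [neg_abs_le (ψ x), hψ x hx]) r hr).trans
    (max_le (by linarith [le_abs_self (g a)]) (by linarith [le_abs_self (g b)]))
  have hge : -1 * g r + -1 * w r ≤ 0 := (((hg.const_mul (-1)).add (hw.const_mul (-1))).le_max ha
    (fun x hx => by linarith [le_abs_self (ψ x), hψ x hx]) r hr).trans
    (max_le (by linarith [neg_abs_le (g a)]) (by linarith [neg_abs_le (g b)]))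
  exact abs_le.2 ⟨by linarith, by linarith⟩

end HasEulerOpOn

theorem hasEulerOpOn_div_rpow (m p : ℝ) {σ : ℝ} (hσ : 0 < σ) {s : Set ℝ}
    (hs : s ⊆ Ioi 0) :
    HasEulerOpOn m (fun r => (r / σ) ^ p) (fun r => p * (p + m - 1) * (r / σ) ^ p) s := by
  refine ((hasEulerOpOn_rpow m p hs).const_mul (σ ^ p)⁻¹).congr (fun r hr => ?_)
    fun r hr => ?_ <;>
  · beta_reduce
    rw [Real.div_rpow (hs hr).le hσ.le]
    ring

noncomputable def forcingBound (m γ R H α c r : ℝ) : ℝ :=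
  H * (r / R) ^ γ + α * ((r / R) ^ (0.1 : ℝ) + r ^ (-0.1 : ℝ)) + c * r ^ (1.1 - m)

/-- Each power `r^p` of `forcingBound` is matched by `-r^p / (p (p + m - 1))`, on which the Euler
operator acts as `-r^p`; the added constants make the barrier nonnegative on `(0, R]`. -/
noncomputable def forcingBarrier (m γ R H α c r : ℝ) : ℝ :=
  H / (γ * (γ + m - 1)) * (1 - (r / R) ^ γ)
    + α / (0.1 * (m - 0.9)) * (1 - (r / R) ^ (0.1 : ℝ))
    + (α * r ^ (-0.1 : ℝ) + c * r ^ (1.1 - m)) / (0.1 * (m - 1.1))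

section forcing

variable {m γ R : ℝ}

theorem forcingBarrier_denominators_pos (hm : 1.1 < m) (hγ : 0 < γ) :
    0 < γ * (γ + m - 1) ∧ 0 < 0.1 * (m - 0.9) ∧ 0 < 0.1 * (m - 1.1) :=
  ⟨by nlinarith, by linarith, by linarith⟩

theorem hasEulerOpOn_forcingBarrier (hm : 1.1 < m) (hγ : 0 < γ) (hR : 0 < R) (H α c : ℝ)
    {s : Set ℝ} (hs : s ⊆ Ioi 0) :
    HasEulerOpOn m (forcingBarrier m γ R H α c) (fun r => -forcingBound m γ R H α c r) s := by
  have : γ + m - 1 ≠ 0 := by linarith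
  have : m - 0.9 ≠ 0 := by linarith
  have : m - 1.1 ≠ 0 := by linarith
  refine (((((hasEulerOpOn_const m (H / (γ * (γ + m - 1)) + α / (0.1 * (m - 0.9))) s).add
    ((hasEulerOpOn_div_rpow m γ hR hs).const_mul (-(H / (γ * (γ + m - 1)))))).add
    ((hasEulerOpOn_div_rpow m 0.1 hR hs).const_mul (-(α / (0.1 * (m - 0.9)))))).add
    ((hasEulerOpOn_rpow m (-0.1) hs).const_mul (α / (0.1 * (m - 1.1))))).add
    ((hasEulerOpOn_rpow m (1.1 - m) hs).const_mul (c / (0.1 * (m - 1.1))))).congr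
    (fun r _ => ?_) fun r _ => ?_
  · simp only [forcingBarrier]
    ring
  · simp only [forcingBound, Pi.zero_apply]
    field_simp
    ring

theorem forcingBarrier_nonneg {H α c : ℝ} (hm : 1.1 < m) (hγ : 0 < γ) (hH : 0 ≤ H)
    (hα : 0 ≤ α) (hc : 0 ≤ c) {r : ℝ} (hr : 0 < r) (hrR : r ≤ R) :
    0 ≤ forcingBarrier m γ R H α c r := by
  have hrR₁ : r / R ≤ 1 := div_le_one_of_le₀ hrR (hr.le.trans hrR)
  have hrR₀ : 0 ≤ r / R := div_nonneg hr.le (hr.le.trans hrR)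
  have : 0 ≤ 1 - (r / R) ^ γ := sub_nonneg.2 (Real.rpow_le_one hrR₀ hrR₁ hγ.le)
  have : 0 ≤ 1 - (r / R) ^ (0.1 : ℝ) :=
    sub_nonneg.2 (Real.rpow_le_one hrR₀ hrR₁ (by norm_num))
  obtain ⟨hμ, hν, hκ⟩ := forcingBarrier_denominators_pos hm hγ
  unfold forcingBarrier
  positivity

theorem forcingBarrier_le {H α c : ℝ} (hm : 1.1 < m) (hγ : 0 < γ) (hH : 0 ≤ H)
    (hα : 0 ≤ α) {r : ℝ} (hr : 1 ≤ r) (hrR : r ≤ R) :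
    forcingBarrier m γ R H α c r ≤ H / (γ * (γ + m - 1)) + α / (0.1 * (m - 0.9))
      + (α + c * r ^ (1.1 - m)) / (0.1 * (m - 1.1)) := by
  have hrR₀ : 0 ≤ r / R := div_nonneg (by linarith) (by linarith)
  obtain ⟨hμ, hν, hκ⟩ := forcingBarrier_denominators_pos hm hγ
  unfold forcingBarrier
  gcongr
  · exact mul_le_of_le_one_right (by positivity) (by linarith [Real.rpow_nonneg hrR₀ γ])
  · exact mul_le_of_le_one_right (by positivity)
      (by linarith [Real.rpow_nonneg hrR₀ (0.1 : ℝ)])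
  · exact mul_le_of_le_one_right hα (Real.rpow_le_one_of_one_le_of_nonpos hr (by norm_num))

end forcing

theorem one_sub_add_sqrt_pos {x : ℝ} (hx : 1 < x) : 0 < 1 - x + √(x ^ 2 + 6 * x - 7) := by
  linarith [(Real.lt_sqrt (x := x - 1) (y := x ^ 2 + 6 * x - 7) (by linarith)).2 (by nlinarith)]

theorem HasEulerOpOn.abs_le_of_abs_le_forcingBound {m a γ R H α c : ℝ} {g ψ : ℝ → ℝ}
    (hm : 1.1 < m) (ha : 1 ≤ a) (hγ : 0 < γ) (hH : 0 ≤ H) (hα : 0 ≤ α) (hc : 0 ≤ c)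
    (hg : HasEulerOpOn m g ψ (Icc a R))
    (hψ : ∀ r ∈ Icc a R, |ψ r| ≤ forcingBound m γ R H α c r) :
    ∀ r ∈ Icc a R,
      |g r| ≤ |g R| + |g a| * a ^ (m - 1) * r ^ (1 - m) + forcingBarrier m γ R H α c r := by
  intro r hr
  have ha₀ : 0 < a := by linarith
  have hR₀ : 0 < R := by linarith [hr.1.trans hr.2]
  have hs : Icc a R ⊆ Ioi 0 := fun x hx => ha₀.trans_le hx.1
  have hw := ((hasEulerOpOn_const m |g R| (Icc a R)).add
    ((hasEulerOpOn_rpow m (1 - m) hs).const_mul (|g a| * a ^ (m - 1)))).add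
    (hasEulerOpOn_forcingBarrier hm hγ hR₀ H α c hs)
  refine hg.abs_le_of_barrier ha₀
    (hw.congr (fun _ _ => rfl) fun x _ => by simp only [Pi.zero_apply]; ring)
    (fun x hx => (hψ x hx).trans_eq (neg_neg _).symm) ?_ ?_ r hr
  · have hpow : a ^ (m - 1) * a ^ (1 - m) = 1 := by
      rw [← Real.rpow_add ha₀]
      simp
    have := forcingBarrier_nonneg hm hγ hH hα hc ha₀ (hr.1.trans hr.2)
    rw [mul_assoc, hpow, mul_one]
    linarith [abs_nonneg (g R)]
  · have := forcingBarrier_nonneg hm hγ hH hα hc hR₀ le_rfl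
    have : 0 ≤ |g a| * a ^ (m - 1) * R ^ (1 - m) := by positivity
    linarith

theorem apriori_estimate_tangential_general (n : ℕ) (hn : 3 ≤ n) (a γ₁ : ℝ)
    (ha : a = (2 : ℝ) ^ ((1 : ℝ) / ((n : ℝ) - 1)) + 1)
    (hγ₁ : γ₁ = (1 - (n : ℝ) + Real.sqrt ((n : ℝ) ^ 2 + 6 * (n : ℝ) - 7)) / 2)
    (c B : ℝ) (hc : 0 ≤ c) :
    ∃ C : ℝ, ∀ R : ℝ, a + 1 ≤ R → ∀ α H : ℝ, 0 < α → 0 < H →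
      ∀ g g' g'' ψ : ℝ → ℝ,
      (∀ r ∈ Set.Icc a R, HasDerivWithinAt g (g' r) (Set.Icc a R) r) →
      (∀ r ∈ Set.Icc a R, HasDerivWithinAt g' (g'' r) (Set.Icc a R) r) →
      (∀ r ∈ Set.Icc a R, r ^ 2 * g'' r + (n : ℝ) * r * g' r = ψ r) →
      (∀ r ∈ Set.Icc a R,
        |ψ r| ≤ H * (r / R) ^ γ₁ + α * ((r / R) ^ (0.1 : ℝ) + r ^ (-0.1 : ℝ))
          + c * r ^ (1.1 - (n : ℝ))) →
      (∀ r ∈ Set.Icc a (a + 1), |g r| ≤ B) →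
      ∀ r ∈ Set.Icc a R,
        |g r| ≤ C * (|g R| + H + α + r ^ (1.1 - (n : ℝ))) := by
  have hn₁ : (1.1 : ℝ) < n := by
    have : (3 : ℝ) ≤ n := by exact_mod_cast hn
    linarith
  have ha₁ : 1 ≤ a := by
    rw [ha]
    linarith [Real.rpow_pos_of_pos two_pos ((1 : ℝ) / ((n : ℝ) - 1))]
  have hγ : 0 < γ₁ := hγ₁ ▸ half_pos (one_sub_add_sqrt_pos (by linarith))
  obtain ⟨hμ, hν, hκ⟩ := forcingBarrier_denominators_pos hn₁ hγ
  set μ := γ₁ * (γ₁ + n - 1)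
  set ν : ℝ := 0.1 * ((n : ℝ) - 0.9)
  set κ : ℝ := 0.1 * ((n : ℝ) - 1.1)
  refine ⟨1 + B * a ^ ((n : ℝ) - 1) + 1 / μ + 1 / ν + (1 + c) / κ, ?_⟩
  intro R hR α H hα hH g g' g'' ψ hg hg' heq hψ hb r hr
  have hga : |g a| ≤ B := hb a ⟨le_rfl, by linarith⟩
  have hr₁ : 1 ≤ r := ha₁.trans hr.1
  have hest := HasEulerOpOn.abs_le_of_abs_le_forcingBound hn₁ ha₁ hγ hH.le hα.le hc
    ⟨g', g'', fun x hx => ⟨hg x hx, hg' x hx, heq x hx⟩⟩ hψ r hr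
  have hX : 0 ≤ r ^ (1.1 - (n : ℝ)) := Real.rpow_nonneg (by linarith) _
  have hB : 0 ≤ B := (abs_nonneg _).trans hga
  set S := |g R| + H + α + r ^ (1.1 - (n : ℝ)) with hS
  calc |g r| ≤ |g R| + |g a| * a ^ ((n : ℝ) - 1) * r ^ (1 - (n : ℝ))
        + forcingBarrier n γ₁ R H α c r := hest
    _ ≤ |g R| + B * a ^ ((n : ℝ) - 1) * r ^ (1.1 - (n : ℝ))
        + (H / μ + α / ν + (α + c * r ^ (1.1 - (n : ℝ))) / κ) := by
      gcongr
      · norm_num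
      · exact forcingBarrier_le hn₁ hγ hH.le hα.le hr₁ hr.2
    _ ≤ S + B * a ^ ((n : ℝ) - 1) * S + (S / μ + S / ν + (S + c * S) / κ) := by
      gcongr <;> linarith [abs_nonneg (g R)]
    _ = _ := by ring

/-- **A priori estimate for the tangential components `r^{-2} h_{ij}`** on the black-hole
manifold `M_BH(r ≤ R)`: solutions `g` of `r² g'' + n r g' = ψ` on `[a, R]` with
`|ψ(r)| ≤ H (r/R)^{γ₁} + α((r/R)^{0.1} + r^{-0.1}) + c r^{1.1-n}` and `|g| ≤ B` on
`[a, a+1]` satisfy `|g(r)| ≤ C(|g(R)| + H + α + r^{1.1-n})`, with `C` independent of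
`R`, `α` and `H`. -/
theorem apriori_estimate_tangential (n : ℕ) (hn : 3 ≤ n) (a γ₁ : ℝ)
    (ha : a = (2 : ℝ) ^ ((1 : ℝ) / ((n : ℝ) - 1)) + 1)
    (hγ₁ : γ₁ = (1 - (n : ℝ) + Real.sqrt ((n : ℝ) ^ 2 + 6 * (n : ℝ) - 7)) / 2)
    (c B : ℝ) (hc : 0 ≤ c) (hB : 0 ≤ B) :
    ∃ C : ℝ, ∀ R : ℝ, a + 1 ≤ R → ∀ α H : ℝ, 0 < α → 0 < H →
      ∀ g g' g'' ψ : ℝ → ℝ,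
      (∀ r ∈ Set.Icc a R, HasDerivWithinAt g (g' r) (Set.Icc a R) r) →
      (∀ r ∈ Set.Icc a R, HasDerivWithinAt g' (g'' r) (Set.Icc a R) r) →
      (∀ r ∈ Set.Icc a R, r ^ 2 * g'' r + (n : ℝ) * r * g' r = ψ r) →
      (∀ r ∈ Set.Icc a R,
        |ψ r| ≤ H * (r / R) ^ γ₁ + α * ((r / R) ^ (0.1 : ℝ) + r ^ (-0.1 : ℝ))
          + c * r ^ (1.1 - (n : ℝ))) →
      (∀ r ∈ Set.Icc a (a + 1), |g r| ≤ B) →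
      ∀ r ∈ Set.Icc a R,
        |g r| ≤ C * (|g R| + H + α + r ^ (1.1 - (n : ℝ))) :=
  apriori_estimate_tangential_general n hn a γ₁ ha hγ₁ c B hc
end

section
/- Let n ≥ 3 be an integer, set r₊ := 2^{1/(n−1)}, and define V(r) := r² − 2·r^{3−n} for r > 0. If h : (r₊, ∞) → ℝ is differentiable, satisfies V(r)·h'(r) + (V'(r) + (n−2)·V(r)/r)·h(r) = 0 for all r > r₊, and is bounded on the interval (r₊, r₊ + 1), then h ≡ 0 on (r₊, ∞). (Indeed, every nonzero solution h(r) = C/(V(r)·r^{n−2}) satisfies (r − r₊)·h(r) → C/((n−1)·r₊^{n−1}) ≠ 0 as r → r₊⁺.) -/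
open Set Filter Topology

/-! Multiplying the equation by `r ^ (n - 2)` turns it into `(V r ^ (n - 2) h)' = 0`, so
`h = C / (V r ^ (n - 2))`. As `V` has a simple zero at `r₊` with `V'(r₊) = (n - 1) r₊`,
`(r - r₊) h(r) → C / ((n - 1) r₊ ^ (n - 1))`, while boundedness of `h` near `r₊` forces this
limit to be `0`; hence `C = 0`. -/

theorem tendsto_sub_mul_nhdsGT_zero_of_abs_le {h : ℝ → ℝ} {a b K : ℝ} (hab : a < b)
    (hK : ∀ r ∈ Ioo a b, |h r| ≤ K) :
    Tendsto (fun r => (r - a) * h r) (𝓝[>] a) (𝓝 0) := by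
  have hsub : Tendsto (fun r => r - a) (𝓝[>] a) (𝓝 0) := by
    simpa using ((continuous_sub_right a).tendsto a).mono_left nhdsWithin_le_nhds
  refine hsub.zero_mul_isBoundedUnder_le (isBoundedUnder_of_eventually_le (a := K) ?_)
  filter_upwards [Ioo_mem_nhdsGT hab] with r hr using hK r hr

theorem tendsto_sub_mul_div_mul_of_hasDerivAt {V g : ℝ → ℝ} {a d : ℝ} (hV : HasDerivAt V d a)
    (hVa : V a = 0) (hd : d ≠ 0) (hg : ContinuousAt g a) (hga : g a ≠ 0) (C : ℝ) :
    Tendsto (fun r => (r - a) * (C / (V r * g r))) (𝓝[≠] a) (𝓝 (C / (d * g a))) := by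
  have hslope : Tendsto (slope V a) (𝓝[≠] a) (𝓝 d) := hasDerivAt_iff_tendsto_slope.mp hV
  refine (tendsto_const_nhds.div (hslope.mul (hg.tendsto.mono_left nhdsWithin_le_nhds))
    (mul_ne_zero hd hga)).congr fun r => ?_
  -- no need to exclude `r = a`: both sides are then `0` since `x / 0 = 0`
  simp only [Pi.div_apply, slope_def_field, hVa, sub_zero, div_eq_mul_inv, mul_inv, inv_inv]
  ring

theorem hasDerivAt_mul_rpow_mul_eq_zero {V h : ℝ → ℝ} {v w p r : ℝ} (hr : r ≠ 0)
    (hV : HasDerivAt V v r) (hh : HasDerivAt h w r)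
    (hode : V r * w + (v + p * V r / r) * h r = 0) :
    HasDerivAt (fun x => V x * x ^ p * h x) 0 r := by
  refine ((hV.mul (Real.hasDerivAt_rpow_const (p := p) (Or.inl hr))).mul hh).congr_deriv ?_
  rw [Pi.mul_apply, Real.rpow_sub_one hr]
  linear_combination r ^ p * hode

theorem exists_eq_div_mul_rpow_of_ode {V V' h h' : ℝ → ℝ} {a p : ℝ} (ha : 0 ≤ a)
    (hV : ∀ r > a, HasDerivAt V (V' r) r) (hh : ∀ r > a, HasDerivAt h (h' r) r)
    (hode : ∀ r > a, V r * h' r + (V' r + p * V r / r) * h r = 0)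
    (hVne : ∀ r > a, V r ≠ 0) :
    ∃ C, ∀ r > a, h r = C / (V r * r ^ p) := by
  have hderiv : ∀ r ∈ Ioi a, HasDerivAt (fun x => V x * x ^ p * h x) 0 r := fun r hr =>
    hasDerivAt_mul_rpow_mul_eq_zero (ha.trans_lt hr).ne' (hV r hr) (hh r hr) (hode r hr)
  obtain ⟨C, hC⟩ := isOpen_Ioi.exists_is_const_of_deriv_eq_zero isPreconnected_Ioi
    (fun r hr => (hderiv r hr).differentiableAt.differentiableWithinAt)
    (fun r hr => (hderiv r hr).deriv)
  refine ⟨C, fun r hr => ?_⟩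
  rw [eq_div_iff (mul_ne_zero (hVne r hr) (Real.rpow_pos_of_pos (ha.trans_lt hr) p).ne')]
  linear_combination hC r hr

noncomputable def horizonRadius (n : ℝ) : ℝ := 2 ^ (1 / (n - 1))

noncomputable def bhPotential (n r : ℝ) : ℝ := r ^ 2 - 2 * r ^ (3 - n)

section BlackHole

variable {n : ℝ}

theorem horizonRadius_pos : 0 < horizonRadius n := Real.rpow_pos_of_pos two_pos _

theorem horizonRadius_rpow_sub_one (hn : 1 < n) : horizonRadius n ^ (n - 1) = 2 := by
  rw [horizonRadius, ← Real.rpow_mul zero_le_two, one_div_mul_cancel (sub_pos.2 hn).ne',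
    Real.rpow_one]

theorem bhPotential_eq_rpow_mul {r : ℝ} (hr : 0 < r) :
    bhPotential n r = r ^ (3 - n) * (r ^ (n - 1) - 2) := by
  rw [bhPotential, mul_sub, ← Real.rpow_add hr, show 3 - n + (n - 1) = 2 by ring,
    Real.rpow_two]
  ring

theorem bhPotential_horizonRadius (hn : 1 < n) : bhPotential n (horizonRadius n) = 0 := by
  rw [bhPotential_eq_rpow_mul horizonRadius_pos, horizonRadius_rpow_sub_one hn, sub_self,
    mul_zero]

theorem bhPotential_pos (hn : 1 < n) {r : ℝ} (hr : horizonRadius n < r) :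
    0 < bhPotential n r := by
  have hr0 : 0 < r := horizonRadius_pos.trans hr
  have hpow : horizonRadius n ^ (n - 1) < r ^ (n - 1) :=
    Real.rpow_lt_rpow horizonRadius_pos.le hr (sub_pos.2 hn)
  rw [horizonRadius_rpow_sub_one hn] at hpow
  rw [bhPotential_eq_rpow_mul hr0]
  exact mul_pos (Real.rpow_pos_of_pos hr0 _) (sub_pos.2 hpow)

theorem hasDerivAt_bhPotential {r : ℝ} (hr : r ≠ 0) :
    HasDerivAt (bhPotential n) (2 * r - 2 * ((3 - n) * r ^ (2 - n))) r := by
  have hrpow := (Real.hasDerivAt_rpow_const (p := 3 - n) (Or.inl hr)).const_mul 2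
  rw [show 3 - n - 1 = 2 - n by ring] at hrpow
  exact ((hasDerivAt_pow 2 r).sub hrpow).congr_deriv (by norm_num)

theorem hasDerivAt_bhPotential_horizonRadius (hn : 1 < n) :
    HasDerivAt (bhPotential n) ((n - 1) * horizonRadius n) (horizonRadius n) := by
  have hrp : horizonRadius n ^ (2 - n) = horizonRadius n / 2 := by
    rw [show 2 - n = 1 - (n - 1) by ring, Real.rpow_sub horizonRadius_pos, Real.rpow_one,
      horizonRadius_rpow_sub_one hn]
  refine (hasDerivAt_bhPotential horizonRadius_pos.ne').congr_deriv ?_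
  rw [hrp]
  ring

theorem tendsto_sub_mul_div_mul_rpow_of_eqOn_bhPotential (hn : 1 < n) {V : ℝ → ℝ}
    (hV : ∀ r > 0, V r = bhPotential n r) (C : ℝ) :
    Tendsto (fun r => (r - horizonRadius n) * (C / (V r * r ^ (n - 2))))
      (𝓝[>] horizonRadius n) (𝓝 (C / ((n - 1) * horizonRadius n ^ (n - 1)))) := by
  have hVeq : V =ᶠ[𝓝 (horizonRadius n)] bhPotential n :=
    eventually_of_mem (Ioi_mem_nhds horizonRadius_pos) hV
  have hVd := (hasDerivAt_bhPotential_horizonRadius hn).congr_of_eventuallyEq hVeq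
  have hlim := tendsto_sub_mul_div_mul_of_hasDerivAt (g := fun r => r ^ (n - 2)) hVd
    ((hVeq.eq_of_nhds).trans (bhPotential_horizonRadius hn))
    (mul_pos (sub_pos.2 hn) horizonRadius_pos).ne'
    (Real.continuousAt_rpow_const _ _ (Or.inl horizonRadius_pos.ne'))
    (Real.rpow_pos_of_pos horizonRadius_pos _).ne' C
  have hval : (n - 1) * horizonRadius n * horizonRadius n ^ (n - 2)
      = (n - 1) * horizonRadius n ^ (n - 1) := by
    rw [mul_assoc, ← Real.rpow_one_add' horizonRadius_pos.le (by linarith),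
      show 1 + (n - 2) = n - 1 by ring]
  rw [hval] at hlim
  exact hlim.mono_left (nhdsGT_le_nhdsNE _)

end BlackHole

/-- **Bounded solutions of the divergence-free ODE vanish:** a solution of
`V h' + (V' + (n-2)V/r) h = 0` on `(r₊, ∞)` that is bounded on `(r₊, r₊+1)` is
identically zero; indeed every solution `h(r) = C/(V(r) r^{n-2})` satisfies
`(r - r₊) h(r) → C/((n-1) r₊^{n-1})` as `r → r₊⁺`. -/
theorem divergence_free_ode_bounded_vanishes (n : ℕ) (hn : 3 ≤ n) (rp : ℝ) (V Vd : ℝ → ℝ)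
    (hrp : rp = (2 : ℝ) ^ ((1 : ℝ) / ((n : ℝ) - 1)))
    (hV : ∀ r > (0 : ℝ), V r = r ^ 2 - 2 * r ^ ((3 : ℝ) - (n : ℝ)))
    (hVd : ∀ r > (0 : ℝ), HasDerivAt V (Vd r) r)
    (h h' : ℝ → ℝ)
    (hd : ∀ r > rp, HasDerivAt h (h' r) r)
    (hode : ∀ r > rp, V r * h' r + (Vd r + ((n : ℝ) - 2) * V r / r) * h r = 0)
    (hbdd : ∃ K : ℝ, ∀ r ∈ Ioo rp (rp + 1), |h r| ≤ K) :
    (∀ r > rp, h r = 0)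
    ∧ ∀ C : ℝ,
        Tendsto (fun r : ℝ => (r - rp) * (C / (V r * r ^ ((n : ℝ) - 2))))
          (nhdsWithin rp (Ioi rp)) (nhds (C / (((n : ℝ) - 1) * rp ^ ((n : ℝ) - 1)))) := by
  obtain ⟨K, hK⟩ := hbdd
  obtain rfl : rp = horizonRadius n := hrp
  have hn1 : (1 : ℝ) < n := by exact_mod_cast (by omega : 1 < n)
  have hV' : ∀ r > (0 : ℝ), V r = bhPotential n r := hV
  have hlim := tendsto_sub_mul_div_mul_rpow_of_eqOn_bhPotential hn1 hV'
  refine ⟨?_, hlim⟩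
  obtain ⟨C, hC⟩ := exists_eq_div_mul_rpow_of_ode horizonRadius_pos.le
    (fun r hr => hVd r (horizonRadius_pos.trans hr)) hd hode
    (fun r hr => hV' r (horizonRadius_pos.trans hr) ▸ (bhPotential_pos hn1 hr).ne')
  have hsol_lim : Tendsto (fun r => (r - horizonRadius n) * h r) (𝓝[>] horizonRadius n)
      (𝓝 (C / ((n - 1) * horizonRadius n ^ ((n : ℝ) - 1)))) :=
    (hlim C).congr' (eventually_mem_nhdsWithin.mono fun r hr => by simp only [hC r hr])
  have hC0 : C / ((n - 1) * horizonRadius n ^ ((n : ℝ) - 1)) = 0 :=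
    tendsto_nhds_unique hsol_lim (tendsto_sub_mul_nhdsGT_zero_of_abs_le (lt_add_one _) hK)
  have hden : (n - 1) * horizonRadius n ^ ((n : ℝ) - 1) ≠ 0 := by
    rw [horizonRadius_rpow_sub_one hn1]; linarith
  intro r hr
  rw [hC r hr, (div_eq_zero_iff.mp hC0).resolve_right hden, zero_div]
end

section
/- Let m ≥ 1 be an integer, let Λ ⊂ ℝ^m be a lattice of full rank m (a discrete cocompact additive subgroup of Euclidean space ℝ^m), and let ι > 0 and V > 0. Assume that the covolume of Λ is less than V and that every nonzero λ ∈ Λ satisfies ‖λ‖ > 2ι. Then the diameter of the quotient ℝ^m / Λ, equipped with the quotient metric d([x],[y]) = inf_{λ ∈ Λ} ‖x − y − λ‖, is at most 2·(V/(ω_m·ι^m) + 1)·ι, where ω_m denotes the Lebesgue volume of the unit ball in ℝ^m. -/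
open Set MeasureTheory
open scoped ENNReal Pointwise

/-- **Diameter bound for flat tori:** if a full-rank lattice `Λ ⊂ ℝ^m` has covolume
less than `V` and every nonzero lattice vector has norm `> 2ι`, then the quotient metric
`d([x],[y]) = inf_{λ ∈ Λ} ‖x - y - λ‖` on `ℝ^m/Λ` satisfies
`diam ≤ 2 (V/(ω_m ι^m) + 1) ι`, where `ω_m` is the volume of the unit ball in `ℝ^m`. -/
theorem flat_torus_diameter_bound (m : ℕ) (hm : 1 ≤ m)
    (Λ : Submodule ℤ (EuclideanSpace ℝ (Fin m)))
    [DiscreteTopology Λ] [IsZLattice ℝ Λ]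
    (ι V : ℝ) (hι : 0 < ι) (hV : 0 < V)
    (hcov : ZLattice.covolume Λ volume < V)
    (hmin : ∀ l ∈ Λ, l ≠ 0 → 2 * ι < ‖l‖) :
    ∀ x y : EuclideanSpace ℝ (Fin m),
      sInf {d : ℝ | ∃ l ∈ Λ, d = ‖x - y - l‖}
        ≤ 2 * (V / ((volume (Metric.ball (0 : EuclideanSpace ℝ (Fin m)) 1)).toReal * ι ^ m)
            + 1) * ι := by
  classical
  intro x y
  haveI : Nonempty (Fin m) := ⟨⟨0, hm⟩⟩
  haveI : Nontrivial (EuclideanSpace ℝ (Fin m)) := inferInstance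
  set ω : ℝ := (volume (Metric.ball (0 : EuclideanSpace ℝ (Fin m)) 1)).toReal with hωdef
  set C : ℝ := V / (ω * ι ^ m) with hCdef
  set S : Set ℝ := {d : ℝ | ∃ l ∈ Λ, d = ‖x - y - l‖} with hSdef
  set L : ℝ := sInf S with hLdef
  by_contra hcon
  push_neg at hcon
  have hDlt : 2 * (C + 1) * ι < L := hcon
  -- basic positivity
  have hBpos : (0 : ℝ≥0∞) < volume (Metric.ball (0 : EuclideanSpace ℝ (Fin m)) 1) :=
    Metric.measure_ball_pos _ _ one_pos
  have hBfin : volume (Metric.ball (0 : EuclideanSpace ℝ (Fin m)) 1) < ⊤ := measure_ball_lt_top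
  have hωpos : 0 < ω := ENNReal.toReal_pos hBpos.ne' hBfin.ne
  have hCpos : 0 < C := div_pos hV (by positivity)
  have hLpos : 0 < L := lt_trans (mul_pos (by linarith : (0:ℝ) < 2 * (C + 1)) hι) hDlt
  -- S is nonempty and bounded below
  have hSne : S.Nonempty := ⟨‖x - y‖, 0, Λ.zero_mem, by simp⟩
  have hSbdd : BddBelow S := ⟨0, by rintro d ⟨l, -, rfl⟩; exact norm_nonneg _⟩
  -- the infimum is attained
  have hclosed : IsClosed (Λ : Set (EuclideanSpace ℝ (Fin m))) := by
    have : DiscreteTopology Λ.toAddSubgroup := ‹DiscreteTopology Λ›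
    exact AddSubgroup.isClosed_of_discrete (H := Λ.toAddSubgroup)
  obtain ⟨l₀, hl₀Λ, hl₀⟩ := hclosed.exists_infDist_eq_dist ⟨0, Λ.zero_mem⟩ (x - y)
  have hinf_eq : Metric.infDist (x - y) (Λ : Set (EuclideanSpace ℝ (Fin m))) = L := by
    apply le_antisymm
    · apply le_csInf hSne
      rintro d ⟨l, hl, rfl⟩
      exact Metric.infDist_le_dist_of_mem (by simpa using hl)
    · rw [hl₀]
      exact csInf_le hSbdd ⟨l₀, hl₀Λ, by rw [dist_eq_norm]⟩
  set w : EuclideanSpace ℝ (Fin m) := x - y - l₀ with hwdef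
  have hw : ‖w‖ = L := by
    rw [hwdef, ← dist_eq_norm, ← hl₀, hinf_eq]
  have hmin' : ∀ l ∈ Λ, L ≤ ‖w - l‖ := by
    intro l hl
    refine csInf_le hSbdd ⟨l₀ + l, Λ.add_mem hl₀Λ hl, ?_⟩
    rw [hwdef]; congr 1; abel
  -- key: points on the segment [0, w] realize the quotient distance
  have key : ∀ s : ℝ, 0 ≤ s → s ≤ 1 → ∀ l ∈ Λ, s * L ≤ ‖s • w - l‖ := by
    intro s hs0 hs1 l hl
    have h1 : L ≤ ‖w - l‖ := hmin' l hl
    have h2 : ‖w - l‖ ≤ ‖w - s • w‖ + ‖s • w - l‖ := by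
      have := dist_triangle w (s • w) l
      simpa [dist_eq_norm] using this
    have h3 : ‖w - s • w‖ = (1 - s) * L := by
      have hws : w - s • w = (1 - s) • w := by rw [sub_smul, one_smul]
      rw [hws, norm_smul, Real.norm_eq_abs, abs_of_nonneg (by linarith), hw]
    have h4 : s * L = L - (1 - s) * L := by ring
    linarith
  -- the chain of points
  set N : ℕ := ⌊C⌋₊ + 1 with hNdef
  have hNleC : (N : ℝ) ≤ C + 1 := by
    rw [hNdef]; push_cast; have := Nat.floor_le hCpos.le; linarith
  have hCltN : C < N := by
    rw [hNdef]; push_cast; exact Nat.lt_floor_add_one C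
  set p : ℕ → EuclideanSpace ℝ (Fin m) := fun k => ((2 * ι * k) / L) • w with hpdef
  have hsk : ∀ k : ℕ, k ≤ N → 2 * ι * k ≤ L := by
    intro k hk
    have h1 : (k : ℝ) ≤ N := by exact_mod_cast hk
    have h2 : 2 * ι * k ≤ 2 * ι * (C + 1) :=
      mul_le_mul_of_nonneg_left (by linarith) (by linarith)
    linarith
  -- separation between the p k modulo the lattice
  have sep : ∀ j k : ℕ, j < k → k ≤ N → ∀ l ∈ Λ, 2 * ι ≤ ‖p k - p j - l‖ := by
    intro j k hjk hkN l hl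
    have hdiff : p k - p j = ((2 * ι * ((k : ℝ) - j)) / L) • w := by
      rw [hpdef]; simp only []
      rw [← sub_smul]; congr 1; field_simp
    set s : ℝ := (2 * ι * ((k : ℝ) - j)) / L with hsdef
    have hjkr : (1 : ℝ) ≤ (k : ℝ) - j := by
      have : (j : ℝ) + 1 ≤ k := by exact_mod_cast hjk
      linarith
    have hjnn : (0 : ℝ) ≤ j := Nat.cast_nonneg j
    have hs0 : 0 ≤ s :=
      div_nonneg (mul_nonneg (by linarith) (by linarith)) hLpos.le
    have hs1 : s ≤ 1 := by
      rw [div_le_one hLpos]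
      have hkk : (k : ℝ) - j ≤ k := by linarith
      have h5 := hsk k hkN
      have h6 : 2 * ι * ((k:ℝ) - j) ≤ 2 * ι * k :=
        mul_le_mul_of_nonneg_left hkk (by linarith)
      linarith
    have hkey := key s hs0 hs1 l hl
    rw [hdiff]
    calc 2 * ι = 2 * ι * 1 := by ring
      _ ≤ 2 * ι * ((k : ℝ) - j) := mul_le_mul_of_nonneg_left hjkr (by linarith)
      _ = s * L := by rw [hsdef]; field_simp
      _ ≤ ‖s • w - l‖ := hkey
  -- measure-theoretic setup
  have hMV : MeasurableVAdd Λ (EuclideanSpace ℝ (Fin m)) :=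
    (inferInstance : MeasurableVAdd Λ.toAddSubgroup (EuclideanSpace ℝ (Fin m)))
  have hVI : VAddInvariantMeasure Λ (EuclideanSpace ℝ (Fin m)) volume :=
    (inferInstance : VAddInvariantMeasure Λ.toAddSubgroup (EuclideanSpace ℝ (Fin m)) volume)
  set b := Module.Free.chooseBasis ℤ Λ with hbdef
  set F : Set (EuclideanSpace ℝ (Fin m)) := ZSpan.fundamentalDomain (b.ofZLatticeBasis ℝ)
    with hFdef
  have hFfund : IsAddFundamentalDomain Λ F volume := ZLattice.isAddFundamentalDomain b volume
  have hFm : MeasurableSet F := ZSpan.fundamentalDomain_measurableSet _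
  have hFfin : volume F < ⊤ := (ZSpan.fundamentalDomain_isBounded _).measure_lt_top
  have hcovF : ZLattice.covolume Λ volume = (volume F).toReal :=
    ZLattice.covolume_eq_measure_fundamentalDomain Λ volume hFfund
  -- translated balls
  have hvadd : ∀ (l : Λ) (q : EuclideanSpace ℝ (Fin m)) (r : ℝ),
      Metric.ball (q + (l : EuclideanSpace ℝ (Fin m))) r = l +ᵥ Metric.ball q r := by
    intro l q r
    ext u
    rw [Set.mem_vadd_set_iff_neg_vadd_mem]
    have hvu : -l +ᵥ u = u - (l : EuclideanSpace ℝ (Fin m)) := by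
      show -(l : EuclideanSpace ℝ (Fin m)) + u = _; abel
    have heq : u - (l : EuclideanSpace ℝ (Fin m)) - q = u - (q + (l : EuclideanSpace ℝ (Fin m))) := by
      abel
    rw [hvu, Metric.mem_ball, Metric.mem_ball, dist_eq_norm, dist_eq_norm, heq]
  -- the packing sets
  set G : ℕ → Set (EuclideanSpace ℝ (Fin m)) :=
    fun k => ⋃ l : Λ, Metric.ball (p k + (l : EuclideanSpace ℝ (Fin m))) ι ∩ F with hGdef
  -- each G k has the measure of a ball of radius ι
  have hGmeas : ∀ k : ℕ, volume (G k) = ENNReal.ofReal (ι ^ m) *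
      volume (Metric.ball (0 : EuclideanSpace ℝ (Fin m)) 1) := by
    intro k
    have hdisj : Pairwise (Function.onFun Disjoint
        fun l : Λ => Metric.ball (p k + (l : EuclideanSpace ℝ (Fin m))) ι ∩ F) := by
      intro l l' hll'
      refine Disjoint.mono inter_subset_left inter_subset_left ?_
      apply Metric.ball_disjoint_ball
      rw [dist_eq_norm]
      have hne : (l : EuclideanSpace ℝ (Fin m)) - l' ≠ 0 := by
        intro h
        exact hll' (Subtype.ext (by rwa [sub_eq_zero] at h))
      have hmem : (l : EuclideanSpace ℝ (Fin m)) - l' ∈ Λ := Λ.sub_mem l.2 l'.2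
      have := hmin _ hmem hne
      calc ι + ι = 2 * ι := by ring
        _ ≤ ‖(l : EuclideanSpace ℝ (Fin m)) - l'‖ := this.le
        _ = ‖p k + (l : EuclideanSpace ℝ (Fin m)) - (p k + l')‖ := by congr 1; abel
    have hballvol : volume (Metric.ball (p k) ι) =
        ENNReal.ofReal (ι ^ m) * volume (Metric.ball (0 : EuclideanSpace ℝ (Fin m)) 1) := by
      rw [Measure.addHaar_ball volume (p k) hι.le, finrank_euclideanSpace_fin]
    calc volume (G k)
        = ∑' l : Λ, volume (Metric.ball (p k + (l : EuclideanSpace ℝ (Fin m))) ι ∩ F) := by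
          rw [hGdef]
          exact measure_iUnion hdisj fun l => Metric.isOpen_ball.measurableSet.inter hFm
      _ = ∑' l : Λ, volume ((l +ᵥ Metric.ball (p k) ι) ∩ F) :=
          tsum_congr fun l => by rw [hvadd]
      _ = volume (Metric.ball (p k) ι) := (hFfund.measure_eq_tsum _).symm
      _ = ENNReal.ofReal (ι ^ m) * volume (Metric.ball (0 : EuclideanSpace ℝ (Fin m)) 1) :=
          hballvol
  -- the G k are pairwise disjoint
  have hGdisj : ∀ j k, j < k → k ≤ N → Disjoint (G j) (G k) := by
    intro j k hjk hkN
    rw [Set.disjoint_iUnion_left]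
    intro l
    rw [Set.disjoint_iUnion_right]
    intro l'
    refine Disjoint.mono inter_subset_left inter_subset_left ?_
    apply Metric.ball_disjoint_ball
    rw [dist_eq_norm]
    have hmem : (l : EuclideanSpace ℝ (Fin m)) - l' ∈ Λ := Λ.sub_mem l.2 l'.2
    have := sep j k hjk hkN _ hmem
    calc ι + ι = 2 * ι := by ring
      _ ≤ ‖p k - p j - ((l : EuclideanSpace ℝ (Fin m)) - l')‖ := this
      _ = ‖p j + (l : EuclideanSpace ℝ (Fin m)) - (p k + l')‖ := by
          rw [← norm_neg]; congr 1; abel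
  -- summing up
  have hGm : ∀ k : ℕ, MeasurableSet (G k) :=
    fun k => MeasurableSet.iUnion fun l => Metric.isOpen_ball.measurableSet.inter hFm
  have hsub : (⋃ k ∈ Finset.range (N + 1), G k) ⊆ F := by
    intro u hu
    simp only [Set.mem_iUnion] at hu
    obtain ⟨k, -, hk⟩ := hu
    rw [hGdef] at hk
    simp only [Set.mem_iUnion] at hk
    obtain ⟨l, hl⟩ := hk
    exact hl.2
  have hpair : (↑(Finset.range (N + 1)) : Set ℕ).PairwiseDisjoint G := by
    intro j hj k hk hjk
    simp only [Finset.coe_range, Set.mem_Iio] at hj hk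
    rcases lt_or_gt_of_ne hjk with h | h
    · exact hGdisj j k h (Nat.lt_succ_iff.mp hk)
    · exact (hGdisj k j h (Nat.lt_succ_iff.mp hj)).symm
  have hsum : ∑ k ∈ Finset.range (N + 1), volume (G k) ≤ volume F := by
    rw [← measure_biUnion_finset hpair fun k _ => hGm k]
    exact measure_mono hsub
  set c : ℝ≥0∞ := ENNReal.ofReal (ι ^ m) *
      volume (Metric.ball (0 : EuclideanSpace ℝ (Fin m)) 1) with hcdef
  have hsum2 : (N + 1 : ℕ) • c ≤ volume F := by
    calc (N + 1 : ℕ) • c = ∑ _k ∈ Finset.range (N + 1), c := by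
          rw [Finset.sum_const, Finset.card_range]
      _ = ∑ k ∈ Finset.range (N + 1), volume (G k) :=
          Finset.sum_congr rfl fun k _ => (hGmeas k).symm
      _ ≤ volume F := hsum
  have htr : (((N + 1 : ℕ) : ℝ≥0∞) * c).toReal = ((N + 1 : ℕ) : ℝ) * (ι ^ m * ω) := by
    rw [hcdef, ENNReal.toReal_mul, ENNReal.toReal_mul, ENNReal.toReal_natCast,
      ENNReal.toReal_ofReal (by positivity : (0:ℝ) ≤ ι ^ m), hωdef]
  have hle : ((N + 1 : ℕ) : ℝ) * (ι ^ m * ω) ≤ (volume F).toReal := by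
    rw [← htr]
    exact ENNReal.toReal_mono hFfin.ne (by rw [← nsmul_eq_mul]; exact hsum2)
  have hltV : ((N + 1 : ℕ) : ℝ) * (ι ^ m * ω) < V := lt_of_le_of_lt (hle.trans_eq hcovF.symm) hcov
  have hNC : ((N + 1 : ℕ) : ℝ) < C := by
    rw [hCdef, lt_div_iff₀ (by positivity)]
    calc ((N + 1 : ℕ) : ℝ) * (ω * ι ^ m) = ((N + 1 : ℕ) : ℝ) * (ι ^ m * ω) := by ring
      _ < V := hltV
  have : (N : ℝ) ≤ ((N + 1 : ℕ) : ℝ) := by push_cast; linarith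
  linarith
end
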